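/- arXiv:1508.07594 — 6 statements merged into one kernel-verified Lean document; each statement's English description precedes it below -/
import Mathlib

section
/- Let P ⊆ ℝ^d be a generalized polytope. Suppose the indicator function of P equals ∑_{i=1}^m α_i · [T_i] at Lebesgue-almost every point of ℝ^d, where each α_i is a real number and each T_i is a simplex (the convex hull of d+1 affinely independent points of ℝ^d). Then every algebraic vertex of P is a vertex of at least one of the simplices T_i. -/
open MeasureTheory Filter Topology RealInnerProductSpace

noncomputable section

/-- Euclidean space `ℝ^d`. -/
abbrev Euc (d : ℕ) := EuclideanSpace ℝ (Fin d)

/-- A convex polyhedron: an intersection of finitely many closed half-spaces. -/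
def IsConvexPolyhedron {d : ℕ} (P : Set (Euc d)) : Prop :=
  ∃ (n : ℕ) (a : Fin n → Euc d) (b : Fin n → ℝ),
    (∀ i, a i ≠ 0) ∧ P = {x | ∀ i, ⟪a i, x⟫ ≤ b i}

/-- A generalized polyhedron: a finite union of convex polyhedra. -/
def IsGenPolyhedron {d : ℕ} (P : Set (Euc d)) : Prop :=
  ∃ (n : ℕ) (Q : Fin n → Set (Euc d)),
    (∀ i, IsConvexPolyhedron (Q i)) ∧ P = ⋃ i, Q i

/-- A line-cone: a generalized polyhedron invariant under translation by every
multiple of some nonzero vector `u`. -/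
def IsLineCone {d : ℕ} (D : Set (Euc d)) : Prop :=
  IsGenPolyhedron D ∧ ∃ u : Euc d, u ≠ 0 ∧ ∀ t : ℝ, (fun x => x + t • u) '' D = D

/-- The tangent cone of `P` at `v`: points `y = v + x` such that `v + ε • x ∈ P`
for all sufficiently small `ε > 0`. -/
def tcone {d : ℕ} (P : Set (Euc d)) (v : Euc d) : Set (Euc d) :=
  {y | ∃ ε₀ > (0 : ℝ), ∀ ε : ℝ, 0 < ε → ε ≤ ε₀ → v + ε • (y - v) ∈ P}

/-- The real-valued indicator function of a set. -/
def ind {d : ℕ} (S : Set (Euc d)) : Euc d → ℝ := S.indicator fun _ => 1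

/-- `f` agrees Lebesgue-almost everywhere with a finite real linear combination of
indicator functions of line-cones. -/
def IsLinCombOfLineCones {d : ℕ} (f : Euc d → ℝ) : Prop :=
  ∃ (k : ℕ) (α : Fin k → ℝ) (D : Fin k → Set (Euc d)),
    (∀ i, IsLineCone (D i)) ∧ f =ᵐ[volume] fun x => ∑ i, α i * ind (D i) x

/-- `v` is an algebraic vertex of `P`: `v ∈ P` and the indicator function of the
tangent cone of `P` at `v` is not a.e. equal to a finite real linear combination of
indicator functions of line-cones. -/
def IsAlgebraicVertex {d : ℕ} (P : Set (Euc d)) (v : Euc d) : Prop :=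
  v ∈ P ∧ ¬ IsLinCombOfLineCones (ind (tcone P v))

/-!
If `v` were a vertex of none of the simplices `Tᵢ`, every tangent cone `tcone Tᵢ v` would be a
line-cone: it is empty when `v ∉ Tᵢ`, and otherwise it is cut out by the facet inequalities of
`Tᵢ` that are tight at `v`, all of which are invariant under translation along `pⱼ₁ - pⱼ₂` for two
vertices whose barycentric coordinates at `v` are nonzero. Passing to tangent cones at `v`
preserves a.e. identities between indicators of finite unions of convex sets: pull the identity
back along the dilations `x ↦ v + ε • (x - v)`, `ε = 1 / (n + 1)`, and use that along each ray
from `v` membership in such a set stabilises as `ε → 0⁺`. So `[tcone P v]` would be a.e. a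
combination of indicators of line-cones, i.e. `v` would not be an algebraic vertex.
-/

open Set

variable {d : ℕ}

theorem mem_tcone_iff {S : Set (Euc d)} {v x : Euc d} :
    x ∈ tcone S v ↔ ∀ᶠ ε in 𝓝[>] (0 : ℝ), v + ε • (x - v) ∈ S := by
  rw [Filter.Eventually, mem_nhdsGT_iff_exists_Ioc_subset]
  exact exists_congr fun ε₀ => and_congr_right fun _ => ⟨fun h ε hε => h ε hε.1 hε.2,
    fun h ε h₀ h₁ => h ⟨h₀, h₁⟩⟩

theorem Convex.eventually_mem_or_eventually_notMem_nhdsGT {J : Set ℝ} (hJ : Convex ℝ J) :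
    (∀ᶠ ε in 𝓝[>] (0 : ℝ), ε ∈ J) ∨ ∀ᶠ ε in 𝓝[>] (0 : ℝ), ε ∉ J := by
  refine (em (∃ᶠ ε in 𝓝[>] (0 : ℝ), ε ∈ J)).imp (fun h => ?_) not_frequently.1
  obtain ⟨t, htJ, ht⟩ := (h.and_eventually self_mem_nhdsWithin).exists
  filter_upwards [Ioo_mem_nhdsGT (show (0 : ℝ) < t from ht)] with ε hε
  obtain ⟨s, hsJ, hs⟩ := (h.and_eventually (Ioo_mem_nhdsGT hε.1)).exists
  exact hJ.ordConnected.out hsJ htJ ⟨hs.2.le, hε.2.le⟩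

theorem tcone_eq_empty_of_notMem {S : Set (Euc d)} (hS : IsClosed S) {v : Euc d}
    (hv : v ∉ S) : tcone S v = ∅ := by
  refine eq_empty_of_forall_notMem fun x hx => hv (hS.mem_of_tendsto ?_ (mem_tcone_iff.1 hx))
  have : Continuous fun ε : ℝ => v + ε • (x - v) := by fun_prop
  simpa using (this.tendsto 0).mono_left nhdsWithin_le_nhds

def IsFiniteUnionOfConvex (S : Set (Euc d)) : Prop :=
  ∃ (n : ℕ) (Q : Fin n → Set (Euc d)), (∀ i, Convex ℝ (Q i)) ∧ S = ⋃ i, Q i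

theorem Convex.isFiniteUnionOfConvex {S : Set (Euc d)} (hS : Convex ℝ S) :
    IsFiniteUnionOfConvex S :=
  ⟨1, fun _ => S, fun _ => hS, (iUnion_const S).symm⟩

theorem IsConvexPolyhedron.convex {Q : Set (Euc d)} (hQ : IsConvexPolyhedron Q) :
    Convex ℝ Q := by
  obtain ⟨n, a, b, -, rfl⟩ := hQ
  have hhalf (i : Fin n) : Convex ℝ {x : Euc d | ⟪a i, x⟫ ≤ b i} :=
    convex_halfSpace_le (innerₛₗ ℝ (a i)).isLinear (b i)
  rw [ofPred_forall]
  exact convex_iInter hhalf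

theorem IsGenPolyhedron.isFiniteUnionOfConvex {P : Set (Euc d)} (hP : IsGenPolyhedron P) :
    IsFiniteUnionOfConvex P := by
  obtain ⟨n, Q, hQ, rfl⟩ := hP
  exact ⟨n, Q, fun i => (hQ i).convex, rfl⟩

theorem IsFiniteUnionOfConvex.eventually_mem_iff_mem_tcone {S : Set (Euc d)}
    (hS : IsFiniteUnionOfConvex S) (v x : Euc d) :
    ∀ᶠ ε in 𝓝[>] (0 : ℝ), (v + ε • (x - v) ∈ S ↔ x ∈ tcone S v) := by
  by_cases hx : x ∈ tcone S v
  · filter_upwards [mem_tcone_iff.1 hx] with ε hε using iff_of_true hε hx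
  obtain ⟨n, Q, hQ, rfl⟩ := hS
  have hray (i : Fin n) : Convex ℝ {ε : ℝ | v + ε • (x - v) ∈ Q i} := by
    have : {ε : ℝ | v + ε • (x - v) ∈ Q i} = AffineMap.lineMap v x ⁻¹' Q i := by
      ext; simp [AffineMap.lineMap_apply, add_comm]
    rw [this]
    exact (hQ i).affine_preimage _
  have hnot : ∀ i, ∀ᶠ ε in 𝓝[>] (0 : ℝ), v + ε • (x - v) ∉ Q i := fun i =>
    (hray i).eventually_mem_or_eventually_notMem_nhdsGT.resolve_left fun h =>
      hx (mem_tcone_iff.2 (h.mono fun _ hε => mem_iUnion_of_mem i hε))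
  filter_upwards [eventually_all.2 hnot] with ε hε
  exact iff_of_false (by simpa using hε) hx

theorem ind_eq_ind_of_mem_iff {S S' : Set (Euc d)} {y y' : Euc d} (h : y ∈ S ↔ y' ∈ S') :
    ind S y = ind S' y' := by
  classical simp only [ind, indicator_apply, h]

theorem quasiMeasurePreserving_dilation (v : Euc d) {ε : ℝ} (hε : ε ≠ 0) :
    Measure.QuasiMeasurePreserving (fun x : Euc d => v + ε • (x - v)) volume volume :=
  ((measurePreserving_add_left volume v).quasiMeasurePreserving.comp
    (Measure.quasiMeasurePreserving_smul volume hε)).comp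
    (measurePreserving_sub_right volume v).quasiMeasurePreserving

theorem ind_tcone_ae_eq_sum {ι : Type*} [Fintype ι] {P : Set (Euc d)} {T : ι → Set (Euc d)}
    {α : ι → ℝ} (hP : IsFiniteUnionOfConvex P) (hT : ∀ i, IsFiniteUnionOfConvex (T i))
    (heq : ind P =ᵐ[volume] fun x => ∑ i, α i * ind (T i) x) (v : Euc d) :
    ind (tcone P v) =ᵐ[volume] fun x => ∑ i, α i * ind (tcone (T i) v) x := by
  have hpos (n : ℕ) : (0 : ℝ) < 1 / (n + 1) := by positivity
  have hae : ∀ᵐ x ∂volume, ∀ n : ℕ, ind P (v + (1 / (n + 1) : ℝ) • (x - v)) =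
      ∑ i, α i * ind (T i) (v + (1 / (n + 1) : ℝ) • (x - v)) :=
    ae_all_iff.2 fun n => (quasiMeasurePreserving_dilation v (hpos n).ne').ae_eq heq
  filter_upwards [hae] with x hx
  have hlim : Tendsto (fun n : ℕ => (1 / (n + 1) : ℝ)) atTop (𝓝[>] 0) :=
    tendsto_nhdsWithin_iff.2 ⟨tendsto_one_div_add_atTop_nhds_zero_nat, .of_forall hpos⟩
  obtain ⟨n, hPn, hTn⟩ := (hlim.eventually ((hP.eventually_mem_iff_mem_tcone v x).and
    (eventually_all.2 fun i => (hT i).eventually_mem_iff_mem_tcone v x))).exists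
  rw [← ind_eq_ind_of_mem_iff hPn, hx n]
  simp only [ind_eq_ind_of_mem_iff (hTn _)]

theorem AffineMap.apply_add_smul_sub {E : Type*} [AddCommGroup E] [Module ℝ E] (f : E →ᵃ[ℝ] ℝ)
    (y a b : E) (t : ℝ) : f (y + t • (a - b)) = f y + t * (f a - f b) := by
  have h := f.map_vadd y (t • (a -ᵥ b))
  rw [map_smul, f.linearMap_vsub] at h
  simpa [vadd_eq_add, vsub_eq_sub, add_comm] using h

theorem AffineBasis.exists_coord_ne_zero_of_ne {ι k V P : Type*} [Fintype ι] [Ring k]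
    [AddCommGroup V] [Module k V] [AddTorsor V P] (b : AffineBasis ι k P) {q : P} (i : ι)
    (hq : q ≠ b i) : ∃ j ≠ i, b.coord j q ≠ 0 := by
  by_contra! h
  refine hq (b.ext_elem fun j => ?_)
  rcases eq_or_ne j i with rfl | hji
  · rw [b.coord_apply_eq, ← b.sum_coord_apply_eq_one q, Finset.sum_eq_single_of_mem j
      (Finset.mem_univ j) fun l _ hl => h l hl]
  · rw [h j hji, b.coord_apply_ne hji]

theorem eventually_nonneg_add_mul_iff {a b : ℝ} (ha : 0 ≤ a) :
    (∀ᶠ ε in 𝓝[>] (0 : ℝ), 0 ≤ a + ε * b) ↔ (a = 0 → 0 ≤ b) := by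
  rcases ha.eq_or_lt with rfl | ha
  · simp only [zero_add, forall_const]
    refine ⟨fun h => ?_, fun hb => ?_⟩
    · obtain ⟨ε, hεb, hε⟩ := (h.and self_mem_nhdsWithin).exists
      exact nonneg_of_mul_nonneg_right hεb hε
    · filter_upwards [self_mem_nhdsWithin] with ε hε using mul_nonneg (le_of_lt hε) hb
  · have hlim : Tendsto (fun ε : ℝ => a + ε * b) (𝓝[>] 0) (𝓝 a) := by
      have : Continuous fun ε : ℝ => a + ε * b := by fun_prop
      simpa using (this.tendsto 0).mono_left nhdsWithin_le_nhds
    simpa [ha.ne'] using hlim.eventually (eventually_ge_nhds ha)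

theorem tcone_setOf_forall_nonneg {ι : Type*} [Finite ι] (f : ι → Euc d →ᵃ[ℝ] ℝ) {v : Euc d}
    (hv : ∀ j, 0 ≤ f j v) :
    tcone {x | ∀ j, 0 ≤ f j x} v = {x | ∀ j, f j v = 0 → 0 ≤ f j x} := by
  ext x
  simp only [mem_tcone_iff, mem_ofPred_eq, AffineMap.apply_add_smul_sub, eventually_all,
    eventually_nonneg_add_mul_iff (hv _)]
  exact forall_congr' fun j => imp_congr_right fun h => by rw [h, sub_zero]

theorem isConvexPolyhedron_setOf_forall_nonneg {ι : Type*} [Finite ι] (f : ι → Euc d →ᵃ[ℝ] ℝ)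
    (hf : ∀ j, (f j).linear ≠ 0) : IsConvexPolyhedron {x | ∀ j, 0 ≤ f j x} := by
  let e := Finite.equivFin ι
  let w (j : ι) : Euc d :=
    (InnerProductSpace.toDual ℝ (Euc d)).symm (f j).linear.toContinuousLinearMap
  have hw (j : ι) (x : Euc d) : f j x = ⟪w j, x⟫ + f j 0 := by
    have h := (f j).linearMap_vsub x 0
    rw [vsub_eq_sub, sub_zero, vsub_eq_sub] at h
    rw [InnerProductSpace.toDual_symm_apply, LinearMap.coe_toContinuousLinearMap', h,
      sub_add_cancel]
  refine ⟨Nat.card ι, fun k => -w (e.symm k), fun k => f (e.symm k) 0,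
    fun k => neg_ne_zero.2 fun h0 => hf (e.symm k) ?_, ?_⟩
  · simpa [w] using h0
  · ext x
    simp only [mem_ofPred_eq, inner_neg_left, neg_le_iff_add_nonneg', ← hw]
    exact e.forall_congr_left

theorem IsConvexPolyhedron.isGenPolyhedron {Q : Set (Euc d)} (hQ : IsConvexPolyhedron Q) :
    IsGenPolyhedron Q :=
  ⟨1, fun _ => Q, fun _ => hQ, (iUnion_const Q).symm⟩

theorem IsGenPolyhedron.isLineCone {C : Set (Euc d)} (hC : IsGenPolyhedron C) {u : Euc d}
    (hu : u ≠ 0) (hCu : ∀ t : ℝ, ∀ y ∈ C, y + t • u ∈ C) : IsLineCone C :=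
  ⟨hC, u, hu, fun t => Subset.antisymm (image_subset_iff.2 fun y hy => hCu t y hy)
    fun y hy => ⟨y + (-t) • u, hCu _ y hy, by simp⟩⟩

theorem isLineCone_empty [Nontrivial (Euc d)] : IsLineCone (∅ : Set (Euc d)) := by
  obtain ⟨u, hu⟩ := exists_ne (0 : Euc d)
  exact IsGenPolyhedron.isLineCone ⟨0, Fin.elim0, fun i => i.elim0, by simp⟩ hu (by simp)

theorem isLineCone_tcone_simplex {p : Fin (d + 1) → Euc d} (hp : AffineIndependent ℝ p)
    {v : Euc d} (hv : ∀ j, p j ≠ v) : IsLineCone (tcone (convexHull ℝ (range p)) v) := by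
  have : Nontrivial (Euc d) := ⟨⟨p 0, v, hv 0⟩⟩
  by_cases hvT : v ∉ convexHull ℝ (range p)
  · rw [tcone_eq_empty_of_notMem ((finite_range p).isClosed_convexHull ℝ) hvT]
    exact isLineCone_empty
  rw [not_not] at hvT
  let b : AffineBasis (Fin (d + 1)) ℝ (Euc d) :=
    ⟨p, hp, hp.affineSpan_eq_top_iff_card_eq_finrank_add_one.2 (by simp)⟩
  have hT : convexHull ℝ (range p) = {x | ∀ j, 0 ≤ b.coord j x} := b.convexHull_eq_nonneg_coord
  rw [hT] at hvT ⊢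
  rw [tcone_setOf_forall_nonneg _ hvT]
  obtain ⟨j₁, -, hj₁⟩ := b.exists_coord_ne_zero_of_ne 0 (hv 0).symm
  obtain ⟨j₂, hj₂₁, hj₂⟩ := b.exists_coord_ne_zero_of_ne j₁ (hv j₁).symm
  have hpoly : IsConvexPolyhedron {x | ∀ j : {j // b.coord j v = 0}, 0 ≤ b.coord j x} := by
    -- `b.coord j` vanishes at `v` but is `1` at `b j`, so it is not constant.
    refine isConvexPolyhedron_setOf_forall_nonneg _ fun j hj => ?_
    have h := (b.coord j).linearMap_vsub (b j) v
    rw [hj, LinearMap.zero_apply, b.coord_apply_eq, j.2] at h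
    norm_num at h
  refine IsGenPolyhedron.isLineCone (u := b j₁ - b j₂) ?_
    (sub_ne_zero.2 (hp.injective.ne hj₂₁.symm)) ?_
  · simpa only [Subtype.forall] using hpoly.isGenPolyhedron
  · intro t y hy j hj
    rw [AffineMap.apply_add_smul_sub, b.coord_apply_ne (by rintro rfl; exact hj₁ hj),
      b.coord_apply_ne (by rintro rfl; exact hj₂ hj), sub_zero, mul_zero, add_zero]
    exact hy j hj

theorem statement_1_general {d : ℕ} (P : Set (Euc d))
    (hP : IsGenPolyhedron P)
    (m : ℕ) (α : Fin m → ℝ) (p : Fin m → Fin (d + 1) → Euc d)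
    (hind : ∀ i, AffineIndependent ℝ (p i))
    (heq : ind P =ᵐ[volume]
      fun x => ∑ i, α i * ind (convexHull ℝ (Set.range (p i))) x)
    (v : Euc d) (hv : IsAlgebraicVertex P v) :
    ∃ i j, p i j = v := by
  by_contra! hvert
  refine hv.2 ⟨m, α, fun i => tcone (convexHull ℝ (range (p i))) v,
    fun i => isLineCone_tcone_simplex (hind i) (hvert i), ?_⟩
  exact ind_tcone_ae_eq_sum hP.isFiniteUnionOfConvex
    (fun i => (convex_convexHull ℝ _).isFiniteUnionOfConvex) heq v

/-- If the indicator function of a generalized polytope `P` is a.e. equal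
to a real linear combination of indicator functions of simplices, then every algebraic
vertex of `P` is a vertex of one of the simplices. -/
theorem statement_1 {d : ℕ} (P : Set (Euc d))
    (hP : IsGenPolyhedron P) (hPb : Bornology.IsBounded P)
    (m : ℕ) (α : Fin m → ℝ) (p : Fin m → Fin (d + 1) → Euc d)
    (hind : ∀ i, AffineIndependent ℝ (p i))
    (heq : ind P =ᵐ[volume]
      fun x => ∑ i, α i * ind (convexHull ℝ (Set.range (p i))) x)
    (v : Euc d) (hv : IsAlgebraicVertex P v) :
    ∃ i j, p i j = v :=
  statement_1_general P hP m α p hind heq v hv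
end
end

section
/- Every generalized polytope P ⊆ ℝ^d of positive Lebesgue measure has at least one algebraic vertex. -/
open MeasureTheory Filter Topology RealInnerProductSpace

noncomputable section

/-! Take `v` of maximal norm on the union of the full-dimensional pieces of `P`. A convex polyhedron
agrees with its tangent cone near each point, so norm-maximality makes the tangent cone of every
full-dimensional piece at `v` lie in a pointed cone `⟪v, y - v⟫ ≤ -η ‖y - v‖`, while the
lower-dimensional pieces contribute null sets. If `ind (tcone P v)` were a.e. `∑ αᵢ ind Dᵢ` with `Dᵢ`
invariant along `uᵢ`, the alternating sum of its translates by all partial sums of the vectors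
`tᵢ • uᵢ` would vanish. Choosing the `tᵢ` so that all nonempty partial sums are long and point
away from the cone, every translate except the trivial one misses the cone on a bounded
full-dimensional piece through `v`, where the alternating sum is therefore `1`. -/

open Finset

section AlternatingSum

variable {E ι : Type*} [AddCommGroup E]

theorem sum_powerset_neg_one_pow_card_mul_eq_zero [DecidableEq ι] {s : Finset ι} {i : ι}
    (hi : i ∈ s) {c : ι → E} {h : E → ℝ} (hh : ∀ x, h (x + c i) = h x) (x : E) :
    ∑ S ∈ s.powerset, (-1) ^ #S * h (x + ∑ j ∈ S, c j) = 0 := by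
  rw [← insert_erase hi, sum_powerset_insert (notMem_erase i s), add_eq_zero_iff_eq_neg,
    ← sum_neg_distrib]
  refine sum_congr rfl fun S hS => ?_
  have hiS : i ∉ S := fun h => notMem_erase i s (mem_powerset.1 hS h)
  rw [card_insert_of_notMem hiS, sum_insert hiS,
    show x + (c i + ∑ j ∈ S, c j) = x + ∑ j ∈ S, c j + c i by abel, hh, pow_succ]
  ring

theorem measure_eq_zero_of_indicator_ae_eq_sum [MeasurableSpace E] [MeasurableAdd E]
    {μ : Measure E} [μ.IsAddRightInvariant] [Fintype ι] {T A : Set E} {g : ι → E → ℝ}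
    {c : ι → E} (hg : ∀ i x, g i (x + c i) = g i x)
    (hT : T.indicator (fun _ => 1) =ᵐ[μ] fun x => ∑ i, g i x) (hAT : A ⊆ T)
    (hesc : ∀ S : Finset ι, S.Nonempty → ∀ᵐ x ∂μ, x ∈ A → x + ∑ j ∈ S, c j ∉ T) :
    μ A = 0 := by
  classical
  have htrans : ∀ᵐ x ∂μ, ∀ S : Finset ι,
      T.indicator (fun _ => 1) (x + ∑ j ∈ S, c j) = ∑ i, g i (x + ∑ j ∈ S, c j) :=
    ae_all_iff.2 fun S => (measurePreserving_add_right μ _).quasiMeasurePreserving.ae_eq hT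
  have hout : ∀ᵐ x ∂μ, ∀ S : Finset ι, S.Nonempty → x ∈ A → x + ∑ j ∈ S, c j ∉ T := by
    refine ae_all_iff.2 fun S => ?_
    rcases S.eq_empty_or_nonempty with rfl | hS
    · exact Eventually.of_forall fun _ h => absurd h not_nonempty_empty
    · exact (hesc S hS).mono fun _ hx _ => hx
  rw [measure_eq_zero_iff_ae_notMem]
  filter_upwards [htrans, hout] with x htrans hout hxA
  have hone :
      ∑ S : Finset ι, (-1) ^ #S * T.indicator (fun _ => (1 : ℝ)) (x + ∑ j ∈ S, c j) = 1 := by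
    rw [sum_eq_single ∅ (fun S _ hS => ?_) (by simp)]
    · simp [hAT hxA]
    · rw [Set.indicator_of_notMem (hout S (nonempty_iff_ne_empty.2 hS) hxA), mul_zero]
  have hzero : ∑ S : Finset ι, (-1) ^ #S * ∑ i, g i (x + ∑ j ∈ S, c j) = 0 := by
    simp_rw [mul_sum]
    rw [sum_comm]
    refine sum_eq_zero fun i _ => ?_
    rw [← powerset_univ]
    exact sum_powerset_neg_one_pow_card_mul_eq_zero (mem_univ i) (hg i) x
  exact one_ne_zero (hone.symm.trans ((sum_congr rfl fun S _ => by rw [htrans S]).trans hzero))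

end AlternatingSum

section Escape

variable {E : Type*}

theorem le_norm_sum_of_add_sum_Iio_le [SeminormedAddCommGroup E] {ι : Type*} [LinearOrder ι]
    [LocallyFiniteOrderBot ι] {c : ι → E} {a : ℝ} (hc : ∀ i, a + ∑ j ∈ Iio i, ‖c j‖ ≤ ‖c i‖)
    {S : Finset ι} (hS : S.Nonempty) : a ≤ ‖∑ i ∈ S, c i‖ := by
  set m := S.max' hS
  have hsub : S.erase m ⊆ Iio m := fun j hj =>
    mem_Iio.2 ((S.le_max' j (mem_of_mem_erase hj)).lt_of_ne (ne_of_mem_erase hj))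
  calc a ≤ ‖c m‖ - ∑ j ∈ Iio m, ‖c j‖ := by linarith [hc m]
    _ ≤ ‖c m‖ - ∑ j ∈ S.erase m, ‖c j‖ := by gcongr
    _ ≤ ‖c m‖ - ‖∑ j ∈ S.erase m, c j‖ := by gcongr; exact norm_sum_le _ _
    _ ≤ ‖c m + ∑ j ∈ S.erase m, c j‖ := by
      simpa using norm_sub_le_norm_add (c m) (∑ j ∈ S.erase m, c j)
    _ = ‖∑ i ∈ S, c i‖ := by rw [add_sum_erase _ _ (S.max'_mem hS)]

theorem exists_inner_nonneg_le_norm_sum [NormedAddCommGroup E] [InnerProductSpace ℝ E]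
    {k : ℕ} {u : Fin k → E} (hu : ∀ i, u i ≠ 0) (p : E) (M : ℝ) :
    ∃ t : Fin k → ℝ, (∀ i, 0 ≤ ⟪p, t i • u i⟫) ∧
      ∀ S : Finset (Fin k), S.Nonempty → M ≤ ‖∑ i ∈ S, t i • u i‖ := by
  -- `t i • u i` has norm `|M| 2 ^ i`, so each one outweighs all earlier ones by `|M|`
  set l : Fin k → ℝ := fun i => |M| * 2 ^ (i : ℕ) / ‖u i‖
  have hl : ∀ i, 0 ≤ l i := fun i => by positivity
  refine ⟨fun i => if 0 ≤ ⟪p, u i⟫ then l i else -l i, fun i => ?_, fun S hS => ?_⟩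
  · rw [real_inner_smul_right]
    dsimp only
    split_ifs with h
    · exact mul_nonneg (hl i) h
    · nlinarith [hl i]
  refine (le_abs_self M).trans (le_norm_sum_of_add_sum_Iio_le (fun i => ?_) hS)
  have hnorm : ∀ j, ‖(if 0 ≤ ⟪p, u j⟫ then l j else -l j) • u j‖ = |M| * 2 ^ (j : ℕ) := by
    intro j
    have hu' : 0 < ‖u j‖ := norm_pos_iff.2 (hu j)
    rw [norm_smul, Real.norm_eq_abs, apply_ite abs, abs_neg, abs_of_nonneg (hl j), ite_self,
      div_mul_cancel₀ _ hu'.ne']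
  have hgeom : ∑ j ∈ Iio i, 2 ^ (j : ℕ) < 2 ^ (i : ℕ) := by
    have := Nat.geomSum_lt (m := 2) (n := i) (s := (Iio i).map Fin.valEmbedding) le_rfl
      fun j hj => mem_Iio.1 (Fin.map_valEmbedding_Iio i ▸ hj)
    rw [sum_map] at this
    exact this
  have hgeom' : (1 : ℝ) + ∑ j ∈ Iio i, (2 : ℝ) ^ (j : ℕ) ≤ 2 ^ (i : ℕ) := by
    rw [add_comm]; exact_mod_cast hgeom
  simp only [hnorm, ← mul_sum]
  nlinarith [abs_nonneg M]

end Escape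

theorem add_smul_mem_iff_of_image_eq {E : Type*} [AddCommGroup E] [Module ℝ E] {D : Set E}
    {u : E} (hD : ∀ t : ℝ, (fun x => x + t • u) '' D = D) (x : E) (t : ℝ) :
    x + t • u ∈ D ↔ x ∈ D := by
  constructor
  · intro hx
    rw [← hD (-t)]
    exact ⟨_, hx, by simp only [neg_smul, add_neg_cancel_right]⟩
  · intro hx
    rw [← hD t]
    exact ⟨x, hx, rfl⟩

section Geometry

variable {d : ℕ} {Q P : Set (Euc d)} {v y : Euc d}

theorem tcone_mono (h : Q ⊆ P) : tcone Q v ⊆ tcone P v :=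
  fun _ ⟨ε₀, hε₀, hy⟩ => ⟨ε₀, hε₀, fun ε hε hεε₀ => h (hy ε hε hεε₀)⟩

theorem add_smul_sub_mem_tcone (hy : y ∈ tcone Q v) {s : ℝ} (hs : 0 < s) :
    v + s • (y - v) ∈ tcone Q v := by
  obtain ⟨ε₀, hε₀, hy⟩ := hy
  refine ⟨ε₀ / s, div_pos hε₀ hs, fun ε hε hεε₀ => ?_⟩
  rw [add_sub_cancel_left, smul_smul]
  exact hy _ (mul_pos hε hs) ((le_div_iff₀ hs).1 hεε₀)

theorem tcone_subset_affineSpan (hv : v ∈ Q) : tcone Q v ⊆ affineSpan ℝ Q := by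
  rintro y ⟨ε₀, hε₀, hy⟩
  have h := AffineSubspace.smul_vsub_vadd_mem (affineSpan ℝ Q) ε₀⁻¹
    (subset_affineSpan ℝ Q (hy ε₀ hε₀ le_rfl)) (subset_affineSpan ℝ Q hv)
    (subset_affineSpan ℝ Q hv)
  rwa [vsub_eq_sub, vadd_eq_add, add_sub_cancel_left, smul_smul, inv_mul_cancel₀ hε₀.ne',
    one_smul, sub_add_cancel] at h

theorem Convex.mem_tcone (hQ : Convex ℝ Q) (hv : v ∈ Q) {ε₀ : ℝ} (hε₀ : 0 < ε₀)
    (hy : v + ε₀ • (y - v) ∈ Q) : y ∈ tcone Q v := by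
  refine ⟨ε₀, hε₀, fun ε hε hεε₀ => ?_⟩
  have h := hQ.add_smul_sub_mem hv hy
    ⟨div_nonneg hε.le hε₀.le, (div_le_one hε₀).2 hεε₀⟩
  rwa [add_sub_cancel_left, smul_smul, div_mul_cancel₀ _ hε₀.ne'] at h

theorem Convex.subset_tcone (hQ : Convex ℝ Q) (hv : v ∈ Q) : Q ⊆ tcone Q v :=
  fun _ hy => hQ.mem_tcone hv one_pos (by rwa [one_smul, add_sub_cancel])

theorem Convex.volume_tcone_eq_zero (hQ : Convex ℝ Q) (hv : v ∈ Q) (h0 : volume Q = 0) :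
    volume (tcone Q v) = 0 :=
  measure_mono_null (tcone_subset_affineSpan hv) <| Measure.addHaar_affineSubspace _ _
    fun htop => (Measure.measure_pos_of_nonempty_interior _
      (hQ.interior_nonempty_iff_affineSpan_eq_top.2 htop)).ne' h0

theorem tcone_iUnion_subset {ι : Type*} [Finite ι] {Q : ι → Set (Euc d)}
    (hcl : ∀ i, IsClosed (Q i)) (hcv : ∀ i, Convex ℝ (Q i)) :
    tcone (⋃ i, Q i) v ⊆ ⋃ i, ⋃ (_ : v ∈ Q i), tcone (Q i) v := by
  rintro y ⟨ε₀, hε₀, hy⟩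
  have hnear : ∀ᶠ z in 𝓝 v, ∀ i, z ∈ Q i → v ∈ Q i := by
    refine eventually_all.2 fun i => ?_
    by_cases hvi : v ∈ Q i
    · exact Eventually.of_forall fun _ _ => hvi
    · exact ((hcl i).isOpen_compl.eventually_mem hvi).mono fun _ hz hzi => absurd hzi hz
  have hray : Tendsto (fun ε : ℝ => v + ε • (y - v)) (𝓝[>] 0) (𝓝 v) := by
    refine tendsto_nhdsWithin_of_tendsto_nhds ?_
    simpa using ((continuous_id.smul continuous_const).const_add v).tendsto (0 : ℝ)
  obtain ⟨ε, hεnear, hε, hεε₀⟩ := ((hray.eventually hnear).and (Ioc_mem_nhdsGT hε₀)).exists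
  obtain ⟨i, hi⟩ := Set.mem_iUnion.1 (hy ε hε hεε₀)
  exact Set.mem_iUnion₂.2 ⟨i, hεnear i hi, (hcv i).mem_tcone (hεnear i hi) hε hi⟩

namespace IsConvexPolyhedron

theorem isClosed (hQ : IsConvexPolyhedron Q) : IsClosed Q := by
  obtain ⟨n, a, b, -, rfl⟩ := hQ
  simp only [Set.ofPred_forall]
  exact isClosed_iInter fun i => isClosed_le (continuous_const.inner continuous_id) continuous_const

theorem convex_s7 (hQ : IsConvexPolyhedron Q) : Convex ℝ Q := by
  obtain ⟨n, a, b, -, rfl⟩ := hQ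
  simp only [Set.ofPred_forall]
  exact convex_iInter fun i => convex_halfSpace_le (innerₛₗ ℝ (a i)).isLinear (b i)

theorem eventually_mem_of_mem_tcone (hQ : IsConvexPolyhedron Q) (v : Euc d) :
    ∀ᶠ y in 𝓝 v, y ∈ tcone Q v → y ∈ Q := by
  obtain ⟨n, a, b, -, rfl⟩ := hQ
  suffices h : ∀ i, ∀ᶠ y in 𝓝 v, y ∈ tcone {x | ∀ j, ⟪a j, x⟫ ≤ b j} v → ⟪a i, y⟫ ≤ b i from
    (eventually_all.2 h).mono fun y hy hyt i => hy i hyt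
  intro i
  rcases lt_or_ge ⟪a i, v⟫ (b i) with hlt | hge
  · exact ((continuous_const.inner continuous_id).continuousAt.eventually_lt continuousAt_const
      hlt).mono fun _ hy _ => hy.le
  · refine Eventually.of_forall fun y ⟨ε₀, hε₀, hy⟩ => ?_
    have h := hy (min ε₀ 1) (lt_min hε₀ one_pos) (min_le_left _ _) i
    simp only [inner_add_right, real_inner_smul_right, inner_sub_right] at h
    nlinarith [min_le_right ε₀ 1, lt_min hε₀ one_pos]

end IsConvexPolyhedron

theorem inner_sub_le_of_mem_tcone {r : ℝ} (hr : 0 < r) (hQv : ∀ z ∈ Q, ‖z‖ ≤ ‖v‖)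
    (hloc : ∀ y ∈ tcone Q v, dist y v ≤ r → y ∈ Q) (hy : y ∈ tcone Q v) :
    ⟪v, y - v⟫ ≤ -(r / 2) * ‖y - v‖ := by
  rcases eq_or_ne y v with rfl | hyv
  · simp
  have hn : 0 < ‖y - v‖ := norm_pos_iff.2 (sub_ne_zero.2 hyv)
  set s := r / ‖y - v‖
  have hs : 0 < s := div_pos hr hn
  have hsn : s * ‖y - v‖ = r := div_mul_cancel₀ _ hn.ne'
  have hz : ‖s • (y - v)‖ = r := by rw [norm_smul, Real.norm_of_nonneg hs.le, hsn]
  have hzQ : v + s • (y - v) ∈ Q :=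
    hloc _ (add_smul_sub_mem_tcone hy hs) (by rw [dist_eq_norm, add_sub_cancel_left, hz])
  have hsq : ‖v + s • (y - v)‖ ^ 2 ≤ ‖v‖ ^ 2 := pow_le_pow_left₀ (norm_nonneg _) (hQv _ hzQ) 2
  rw [norm_add_sq_real, hz, real_inner_smul_right] at hsq
  nlinarith

theorem IsLinCombOfLineCones.volume_eq_zero_of_ae_pointed {T A : Set (Euc d)}
    (hT : IsLinCombOfLineCones (ind T)) {p : Euc d} {η : ℝ} (hη : 0 < η)
    (hpt : ∀ᵐ y, y ∈ T → ⟪p, y - v⟫ ≤ -η * ‖y - v‖) (hAT : A ⊆ T)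
    (hA : Bornology.IsBounded A) : volume A = 0 := by
  obtain ⟨k, α, D, hD, hae⟩ := hT
  choose u hu hDu using fun i => (hD i).2
  obtain ⟨R, hR⟩ := hA.subset_closedBall v
  obtain ⟨t, htp, htM⟩ := exists_inner_nonneg_le_norm_sum hu p (R + ‖p‖ * R / η + 1)
  refine measure_eq_zero_of_indicator_ae_eq_sum (g := fun i x => α i * ind (D i) x)
    (c := fun i => t i • u i) (fun i x => ?_) hae hAT fun S hS => ?_
  · classical
    simp only [ind, Set.indicator_apply, add_smul_mem_iff_of_image_eq (hDu i)]
  set w := ∑ j ∈ S, t j • u j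
  have hw : 0 ≤ ⟪p, w⟫ := by rw [inner_sum]; exact sum_nonneg fun j _ => htp j
  filter_upwards [(measurePreserving_add_right volume w).quasiMeasurePreserving.ae hpt]
    with x hx hxA hxT
  have hxv : ‖x - v‖ ≤ R := by simpa [dist_eq_norm] using hR hxA
  have hinner : -(‖p‖ * R) ≤ ⟪p, x + w - v⟫ := by
    rw [show x + w - v = (x - v) + w by abel, inner_add_right]
    have := (abs_le.1 (abs_real_inner_le_norm p (x - v))).1
    nlinarith [norm_nonneg p]
  have hnorm : ‖w‖ - R ≤ ‖x + w - v‖ := by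
    have := norm_sub_le (x + w - v) (x - v)
    rw [show x + w - v - (x - v) = w by abel] at this
    linarith
  have hcancel : η * (‖p‖ * R / η) = ‖p‖ * R := mul_div_cancel₀ _ hη.ne'
  nlinarith [hx hxT, htM S hS, mul_le_mul_of_nonneg_left hnorm hη.le]

theorem exists_pos_ae_inner_sub_le_of_mem_tcone {n : ℕ} {Q : Fin n → Set (Euc d)}
    (hQ : ∀ i, IsConvexPolyhedron (Q i)) (hv : ∀ i, 0 < volume (Q i) → ∀ z ∈ Q i, ‖z‖ ≤ ‖v‖) :
    ∃ η > 0, ∀ᵐ y, y ∈ tcone (⋃ i, Q i) v → ⟪v, y - v⟫ ≤ -η * ‖y - v‖ := by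
  obtain ⟨r, hr, hloc⟩ : ∃ r > 0, ∀ y ∈ Metric.closedBall v r, ∀ i, y ∈ tcone (Q i) v → y ∈ Q i :=
    Metric.nhds_basis_closedBall.eventually_iff.1
      (eventually_all.2 fun i => (hQ i).eventually_mem_of_mem_tcone v)
  refine ⟨r / 2, half_pos hr, ?_⟩
  have hnull : volume (⋃ i, ⋃ (_ : v ∈ Q i ∧ volume (Q i) = 0), tcone (Q i) v) = 0 :=
    measure_iUnion_null fun i => measure_iUnion_null fun h =>
      (hQ i).convex_s7.volume_tcone_eq_zero h.1 h.2
  filter_upwards [measure_eq_zero_iff_ae_notMem.1 hnull] with y hyN hy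
  obtain ⟨i, hvi, hyi⟩ :=
    Set.mem_iUnion₂.1 (tcone_iUnion_subset (fun i => (hQ i).isClosed) (fun i => (hQ i).convex_s7) hy)
  have hi : 0 < volume (Q i) := pos_iff_ne_zero.2 fun h0 => hyN (Set.mem_iUnion₂.2 ⟨i, ⟨hvi, h0⟩, hyi⟩)
  exact inner_sub_le_of_mem_tcone hr (hv i hi) (fun y hy hd => hloc y hd i hy) hyi

end Geometry

/-- Every generalized polytope of positive Lebesgue measure has an
algebraic vertex. -/
theorem statement_7 {d : ℕ} (P : Set (Euc d))
    (hP : IsGenPolyhedron P) (hPb : Bornology.IsBounded P)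
    (hpos : 0 < volume P) :
    ∃ v : Euc d, IsAlgebraicVertex P v := by
  obtain ⟨n, Q, hQ, rfl⟩ := hP
  have hQb : ∀ i, Bornology.IsBounded (Q i) := fun i => hPb.subset (Set.subset_iUnion Q i)
  set K := ⋃ i ∈ {i | 0 < volume (Q i)}, Q i
  have hKc : IsCompact K := (Set.toFinite _).isCompact_biUnion fun i _ =>
    Metric.isCompact_of_isClosed_isBounded (hQ i).isClosed (hQb i)
  have hKne : K.Nonempty := by
    obtain ⟨i, hi⟩ := exists_measure_pos_of_not_measure_iUnion_null hpos.ne'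
    obtain ⟨x, hx⟩ := nonempty_of_measure_ne_zero hi.ne'
    exact ⟨x, Set.mem_biUnion hi hx⟩
  obtain ⟨v, hvK, hvmax⟩ := hKc.exists_isMaxOn hKne continuous_norm.continuousOn
  obtain ⟨i₀, hi₀, hvi₀⟩ := Set.mem_iUnion₂.1 hvK
  refine ⟨v, Set.mem_iUnion_of_mem i₀ hvi₀, fun hlin => ?_⟩
  obtain ⟨η, hη, hpt⟩ := exists_pos_ae_inner_sub_le_of_mem_tcone hQ
    fun i hi z hz => hvmax (Set.mem_biUnion hi hz)
  have hsub : Q i₀ ⊆ tcone (⋃ i, Q i) v :=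
    ((hQ i₀).convex_s7.subset_tcone hvi₀).trans (tcone_mono (Set.subset_iUnion Q i₀))
  exact hi₀.ne' (hlin.volume_eq_zero_of_ae_pointed hη hpt hsub (hQb i₀))
end
end

section
/- Let P ⊆ ℝ^d be a generalized polyhedron, let n be a unit vector, and let h = {x ∈ ℝ^d : ⟨n,x⟩ = c} be a hyperplane with normal n. Then for almost every x ∈ h (with respect to (d−1)-dimensional Hausdorff measure on h) both one-sided limits lim_{ε→0⁺}[P](x+εn) and lim_{ε→0⁺}[P](x−εn) exist; moreover, the signed section f_h(x) = lim_{ε→0⁺}[P](x+εn) − lim_{ε→0⁺}[P](x−εn) agrees, for almost every x ∈ h, with a finite real linear combination of indicator functions of convex polyhedra contained in h. -/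
open MeasureTheory Filter Topology RealInnerProductSpace

noncomputable section

open Module

/-!
Along a direction `v`, membership of `x + ε • v` in a half-space `⟪a, ·⟫ ≤ b` is constant for
all small `ε > 0`: it is decided by `⟪a, x⟫ < b`, or by `⟪a, v⟫ ≤ 0` in the tie `⟪a, x⟫ = b`.
This survives finite unions and intersections, so at every point both one-sided limits of `[P]`
exist and are the indicators of explicit germ sets. On the hyperplane `⟪n, ·⟫ = c` a constraint
whose normal is parallel to `n` is constant, and for any other constraint the tie happens on an
affine subspace of codimension two, which is `μH[d - 1]`-null. Off these null sets each germ set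
is a finite union of convex polyhedra in the hyperplane, and inclusion–exclusion writes its
indicator as a linear combination of indicators of their intersections.
-/

section Germ

variable {E : Type*}

def IsGermAlong [AddCommGroup E] [Module ℝ E] (v : E) (S G : Set E) : Prop :=
  ∀ x, ∀ᶠ ε in 𝓝[>] (0 : ℝ), (x + ε • v ∈ S ↔ x ∈ G)

namespace IsGermAlong

variable [AddCommGroup E] [Module ℝ E] {v : E} {ι : Type*} [Finite ι]

theorem iInter {S G : ι → Set E} (h : ∀ i, IsGermAlong v (S i) (G i)) :
    IsGermAlong v (⋂ i, S i) (⋂ i, G i) := fun x =>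
  (eventually_all.2 fun i => h i x).mono fun _ hε => by
    simp only [Set.mem_iInter]; exact forall_congr' hε

theorem iUnion {S G : ι → Set E} (h : ∀ i, IsGermAlong v (S i) (G i)) :
    IsGermAlong v (⋃ i, S i) (⋃ i, G i) := fun x =>
  (eventually_all.2 fun i => h i x).mono fun _ hε => by
    simp only [Set.mem_iUnion]; exact exists_congr hε

theorem tendsto_indicator {S G : Set E} (h : IsGermAlong v S G) (x : E) :
    Tendsto (fun ε : ℝ => S.indicator (fun _ => (1 : ℝ)) (x + ε • v)) (𝓝[>] 0)
      (𝓝 (G.indicator (fun _ => 1) x)) :=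
  tendsto_const_nhds.congr' <| (h x).mono fun _ hε => by by_cases hx : x ∈ G <;> simp [hx, hε]

end IsGermAlong

variable [NormedAddCommGroup E] [InnerProductSpace ℝ E]

def halfSpaceGerm (v a : E) (b : ℝ) : Set E :=
  {x | ⟪a, x⟫ < b ∨ ⟪a, x⟫ = b ∧ ⟪a, v⟫ ≤ 0}

theorem isGermAlong_halfSpace (v a : E) (b : ℝ) :
    IsGermAlong v {y | ⟪a, y⟫ ≤ b} (halfSpaceGerm v a b) := by
  intro x
  have hcont : Tendsto (fun ε : ℝ => ⟪a, x + ε • v⟫) (𝓝[>] 0) (𝓝 ⟪a, x⟫) := by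
    have : Continuous fun ε : ℝ => ⟪a, x + ε • v⟫ := by fun_prop
    simpa using (this.tendsto 0).mono_left nhdsWithin_le_nhds
  rcases lt_trichotomy ⟪a, x⟫ b with hlt | heq | hgt
  · filter_upwards [hcont.eventually_lt_const hlt] with ε hε
    simp [halfSpaceGerm, hlt, hε.le]
  · filter_upwards [self_mem_nhdsWithin] with ε (hε : 0 < ε)
    simpa [halfSpaceGerm, inner_add_right, real_inner_smul_right, heq] using
      mul_le_mul_iff_right₀ (b := ⟪a, v⟫) (c := 0) hε
  · filter_upwards [hcont.eventually_const_lt hgt] with ε hε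
    simp [halfSpaceGerm, hgt.not_gt, hgt.ne', hε.not_ge]

end Germ

section AlmostEverywhere

variable {E : Type*} [NormedAddCommGroup E] [InnerProductSpace ℝ E] [MeasurableSpace E]
  {ν : Measure E} {n : E} {c : ℝ}

theorem halfSpaceGerm_ae_eq (hH : ∀ᵐ x ∂ν, ⟪n, x⟫ = c)
    (hν : ∀ a ∉ ℝ ∙ n, ∀ b, ν {x | ⟪a, x⟫ = b} = 0) (v a : E) (b : ℝ) :
    ∃ K ∈ ({Set.univ, ∅, {x | ⟪a, x⟫ ≤ b}} : Set (Set E)), halfSpaceGerm v a b =ᵐ[ν] K := by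
  by_cases hv : ⟪a, v⟫ ≤ 0
  · refine ⟨{x | ⟪a, x⟫ ≤ b}, by simp, EventuallyEq.of_eq ?_⟩
    ext x
    simp [halfSpaceGerm, hv, le_iff_lt_or_eq]
  have hgerm : halfSpaceGerm v a b = {x | ⟪a, x⟫ < b} := by
    ext x
    simp [halfSpaceGerm, hv]
  rw [hgerm]
  by_cases ha : a ∈ ℝ ∙ n
  · obtain ⟨t, rfl⟩ := Submodule.mem_span_singleton.1 ha
    have hconst : ∀ᵐ x ∂ν, ⟪t • n, x⟫ = t * c :=
      hH.mono fun x hx => by rw [real_inner_smul_left, hx]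
    by_cases htc : t * c < b
    · exact ⟨Set.univ, by simp, eventuallyEq_set.2 (hconst.mono fun x hx => by simp [hx, htc])⟩
    · exact ⟨∅, by simp, eventuallyEq_set.2 (hconst.mono fun x hx => by simp [hx, htc])⟩
  · refine ⟨{x | ⟪a, x⟫ ≤ b}, by simp, ae_eq_set.2 ⟨?_, measure_mono_null ?_ (hν a ha b)⟩⟩
    · exact measure_mono_null (fun x (hx : ⟪a, x⟫ < b ∧ ¬⟪a, x⟫ ≤ b) => hx.2 hx.1.le) measure_empty
    · exact fun x hx => le_antisymm hx.1 (not_lt.1 hx.2)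

end AlmostEverywhere

theorem hausdorffMeasure_inter_hyperplanes_eq_zero {E : Type*} [NormedAddCommGroup E]
    [InnerProductSpace ℝ E] [FiniteDimensional ℝ E] [MeasurableSpace E] [BorelSpace E]
    {n a : E} (hna : LinearIndependent ℝ ![n, a]) (c b : ℝ) {s : ℝ}
    (hs : (finrank ℝ E : ℝ) - 2 < s) :
    μH[s] {x | ⟪n, x⟫ = c ∧ ⟪a, x⟫ = b} = 0 := by
  set S := {x : E | ⟪n, x⟫ = c ∧ ⟪a, x⟫ = b}
  set K := Submodule.span ℝ (Set.range ![n, a])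
  rcases S.eq_empty_or_nonempty with hS | hS
  · rw [hS, measure_empty]
  have hconv : Convex ℝ S := by
    intro x hx y hy α β _ _ hαβ
    simp only [S, Set.mem_ofPred_eq, inner_add_right, real_inner_smul_right, hx.1, hx.2, hy.1,
      hy.2, ← add_mul, hαβ, one_mul, and_self]
  have hspan : vectorSpan ℝ S ≤ Kᗮ := by
    rw [vectorSpan_def, Submodule.span_le]
    rintro _ ⟨x, hx, y, hy, rfl⟩ u hu
    obtain ⟨w, rfl⟩ := (Submodule.mem_span_range_iff_exists_fun ℝ).1 hu
    simp only [vsub_eq_sub, inner_sub_right, Fin.sum_univ_two, Matrix.cons_val_zero, Matrix.cons_val_one, inner_add_left,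
      real_inner_smul_left, hx.1, hx.2, hy.1, hy.2, sub_self]
  have hrank : finrank ℝ Kᗮ + 2 = finrank ℝ E := by
    rw [← K.finrank_add_finrank_orthogonal, finrank_span_eq_card hna, Fintype.card_fin, add_comm]
  have hdim : dimH S ≤ finrank ℝ Kᗮ :=
    (Real.Convex.dimH_eq_finrank_vectorSpan hconv hS).le.trans
      (by exact_mod_cast Submodule.finrank_mono hspan)
  have hs0 : 0 ≤ s := by
    have : (2 : ℝ) ≤ finrank ℝ E := by exact_mod_cast hrank ▸ Nat.le_add_left 2 _
    linarith
  rw [← Real.coe_toNNReal s hs0]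
  refine hausdorffMeasure_of_dimH_lt (hdim.trans_lt ?_)
  rw [← ENNReal.coe_natCast, ENNReal.coe_lt_coe, Real.lt_toNNReal_iff_coe_lt, NNReal.coe_natCast]
  have : ((finrank ℝ Kᗮ : ℕ) : ℝ) + 2 = finrank ℝ E := by exact_mod_cast hrank
  linarith

theorem hausdorffMeasure_restrict_hyperplane_eq_zero {E : Type*} [NormedAddCommGroup E]
    [InnerProductSpace ℝ E] [FiniteDimensional ℝ E] [MeasurableSpace E] [BorelSpace E]
    {n a : E} (hn : n ≠ 0) (ha : a ∉ ℝ ∙ n) (c b : ℝ) {s : ℝ}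
    (hs : (finrank ℝ E : ℝ) - 2 < s) :
    (μH[s].restrict {x | ⟪n, x⟫ = c}) {x | ⟪a, x⟫ = b} = 0 := by
  have hH : MeasurableSet {x : E | ⟪n, x⟫ = c} :=
    measurableSet_eq_fun (by fun_prop) measurable_const
  rw [Measure.restrict_apply' hH, Set.inter_comm]
  refine hausdorffMeasure_inter_hyperplanes_eq_zero ?_ c b hs
  exact (LinearIndependent.pair_iff' hn).2 fun t ht =>
    ha (Submodule.mem_span_singleton.2 ⟨t, ht⟩)

theorem indicator_biUnion_mem_span {α ι R : Type*} [Ring R] {𝒞 : Set (Set α)}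
    (h𝒞 : ∀ s ∈ 𝒞, ∀ t ∈ 𝒞, s ∩ t ∈ 𝒞) (I : Finset ι) {S : ι → Set α}
    (hS : ∀ i ∈ I, S i ∈ 𝒞) :
    (⋃ i ∈ I, S i).indicator (fun _ => (1 : R)) ∈
      Submodule.span R ((fun s : Set α => s.indicator fun _ => (1 : R)) '' 𝒞) := by
  classical
  induction I using Finset.induction_on generalizing S with
  | empty =>
    simp only [Finset.notMem_empty, Set.iUnion_of_empty, Set.iUnion_empty, Set.indicator_empty]
    exact zero_mem _
  | insert i I _ ih =>
    have hi : S i ∈ 𝒞 := hS i (Finset.mem_insert_self i I)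
    have hI : ∀ j ∈ I, S j ∈ 𝒞 := fun j hj => hS j (Finset.mem_insert_of_mem hj)
    rw [Finset.set_biUnion_insert,
      eq_sub_of_add_eq (Set.indicator_union_add_inter (fun _ => (1 : R)) _ _), Set.inter_iUnion₂]
    exact sub_mem (add_mem (Submodule.subset_span ⟨_, hi, rfl⟩) (ih hI))
      (ih fun j hj => h𝒞 _ hi _ (hI j hj))

section ConvexPolyhedron

variable {d : ℕ}

theorem isConvexPolyhedron_of_finite {ι : Type*} [Finite ι] (a : ι → Euc d) (b : ι → ℝ)
    (ha : ∀ i, a i ≠ 0) : IsConvexPolyhedron {x | ∀ i, ⟪a i, x⟫ ≤ b i} := by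
  let e := Finite.equivFin ι
  refine ⟨Nat.card ι, a ∘ e.symm, b ∘ e.symm, fun i => ha _, ?_⟩
  ext x
  exact e.symm.forall_congr_right.symm

theorem isConvexPolyhedron_univ : IsConvexPolyhedron (Set.univ : Set (Euc d)) :=
  ⟨0, finZeroElim, finZeroElim, finZeroElim, by ext x; simp⟩

theorem isConvexPolyhedron_halfSpace {a : Euc d} (ha : a ≠ 0) (b : ℝ) :
    IsConvexPolyhedron {x | ⟪a, x⟫ ≤ b} := by
  simpa using isConvexPolyhedron_of_finite (fun _ : Unit => a) (fun _ => b) fun _ => ha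

theorem IsConvexPolyhedron.iInter {ι : Type*} [Finite ι] {P : ι → Set (Euc d)}
    (hP : ∀ i, IsConvexPolyhedron (P i)) : IsConvexPolyhedron (⋂ i, P i) := by
  choose N a b ha hPab using hP
  convert isConvexPolyhedron_of_finite (fun p : Σ i, Fin (N i) => a p.1 p.2)
    (fun p => b p.1 p.2) fun p => ha p.1 p.2
  ext x
  simp [hPab, Sigma.forall]

theorem IsConvexPolyhedron.inter {P Q : Set (Euc d)} (hP : IsConvexPolyhedron P)
    (hQ : IsConvexPolyhedron Q) : IsConvexPolyhedron (P ∩ Q) := by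
  rw [Set.inter_eq_iInter]
  exact IsConvexPolyhedron.iInter fun i => by cases i <;> assumption

theorem isConvexPolyhedron_hyperplane {n : Euc d} (hn : n ≠ 0) (c : ℝ) :
    IsConvexPolyhedron {x | ⟪n, x⟫ = c} := by
  convert (isConvexPolyhedron_halfSpace hn c).inter
    (isConvexPolyhedron_halfSpace (neg_ne_zero.2 hn) (-c)) using 1
  ext x
  simp [le_antisymm_iff]

theorem isConvexPolyhedron_empty {a : Euc d} (ha : a ≠ 0) :
    IsConvexPolyhedron (∅ : Set (Euc d)) := by
  convert (isConvexPolyhedron_halfSpace ha 0).inter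
    (isConvexPolyhedron_halfSpace (neg_ne_zero.2 ha) (-1)) using 1
  ext x
  simp only [Set.mem_empty_iff_false, Set.mem_inter_iff, Set.mem_ofPred_eq, inner_neg_left,
    false_iff, not_and, not_le]
  intro h
  linarith

end ConvexPolyhedron

theorem IsGenPolyhedron.exists_germ_ae_eq_mem_span {d : ℕ} {P : Set (Euc d)}
    (hP : IsGenPolyhedron P) {ν : Measure (Euc d)} {n : Euc d} (hn : n ≠ 0) {c : ℝ}
    (hH : ∀ᵐ x ∂ν, ⟪n, x⟫ = c) (hν : ∀ a ∉ ℝ ∙ n, ∀ b, ν {x | ⟪a, x⟫ = b} = 0) (v : Euc d) :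
    ∃ G, IsGermAlong v P G ∧ ∃ f ∈ Submodule.span ℝ
      (ind '' {Q | IsConvexPolyhedron Q ∧ Q ⊆ {x | ⟪n, x⟫ = c}}), ind G =ᵐ[ν] f := by
  set H := {x : Euc d | ⟪n, x⟫ = c}
  obtain ⟨m, Q, hQ, rfl⟩ := hP
  choose N A B hA hQAB using hQ
  choose K hK hKae using fun j i => halfSpaceGerm_ae_eq hH hν v (A j i) (B j i)
  have hKpoly : ∀ j i, IsConvexPolyhedron (K j i) := fun j i => by
    simp only [Set.mem_insert_iff, Set.mem_singleton_iff] at hK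
    rcases hK j i with h | h | h <;> rw [h]
    exacts [isConvexPolyhedron_univ, isConvexPolyhedron_empty (hA j i),
      isConvexPolyhedron_halfSpace (hA j i) _]
  have hgerm : IsGermAlong v (⋃ j, Q j) (⋃ j, ⋂ i, halfSpaceGerm v (A j i) (B j i)) :=
    IsGermAlong.iUnion fun j => by
      rw [hQAB j, Set.ofPred_forall]
      exact IsGermAlong.iInter fun i => isGermAlong_halfSpace v (A j i) (B j i)
  have hspan : ind (⋃ j ∈ Finset.univ, (⋂ i, K j i) ∩ H) ∈
      Submodule.span ℝ (ind '' {Q | IsConvexPolyhedron Q ∧ Q ⊆ H}) :=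
    indicator_biUnion_mem_span (𝒞 := {Q | IsConvexPolyhedron Q ∧ Q ⊆ H})
      (fun s hs t ht => ⟨hs.1.inter ht.1, Set.inter_subset_left.trans hs.2⟩) _ fun j _ =>
        ⟨(IsConvexPolyhedron.iInter (hKpoly j)).inter (isConvexPolyhedron_hyperplane hn c),
          Set.inter_subset_right⟩
  have hae : (⋃ j, ⋂ i, halfSpaceGerm v (A j i) (B j i)) =ᵐ[ν]
      ⋃ j ∈ Finset.univ, (⋂ i, K j i) ∩ H := by
    simp only [Finset.mem_univ, Set.iUnion_true]
    refine Filter.EventuallyEq.countable_iUnion fun j =>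
      (Filter.EventuallyEq.countable_iInter (hKae j)).trans ?_
    exact eventuallyEq_set.2 (hH.mono fun x hx => by simp [H, hx])
  exact ⟨_, hgerm, _, hspan, indicator_ae_eq_of_ae_eq_set hae⟩

/-- For a generalized polyhedron `P` and a hyperplane `h` with unit
normal `n`, both one-sided limits of the indicator function of `P` exist at almost every
point of `h`, and the signed section of the indicator function of `P` by `h` agrees
almost everywhere on `h` with a finite real linear combination of indicator functions of
convex polyhedra contained in `h`. -/
theorem statement_9 {d : ℕ} (P : Set (Euc d)) (hP : IsGenPolyhedron P)
    (n : Euc d) (hn : ‖n‖ = 1) (c : ℝ) :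
    (∀ᵐ x ∂((μH[(d : ℝ) - 1] : Measure (Euc d)).restrict {x : Euc d | ⟪n, x⟫ = c}),
        (∃ Lp, Tendsto (fun ε : ℝ => ind P (x + ε • n)) (𝓝[>] 0) (𝓝 Lp)) ∧
        (∃ Lm, Tendsto (fun ε : ℝ => ind P (x - ε • n)) (𝓝[>] 0) (𝓝 Lm))) ∧
    ∃ (k : ℕ) (β : Fin k → ℝ) (Q : Fin k → Set (Euc d)),
      (∀ i, IsConvexPolyhedron (Q i) ∧ Q i ⊆ {x : Euc d | ⟪n, x⟫ = c}) ∧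
      ∀ᵐ x ∂((μH[(d : ℝ) - 1] : Measure (Euc d)).restrict {x : Euc d | ⟪n, x⟫ = c}),
        ∀ Lp Lm : ℝ,
          Tendsto (fun ε : ℝ => ind P (x + ε • n)) (𝓝[>] 0) (𝓝 Lp) →
          Tendsto (fun ε : ℝ => ind P (x - ε • n)) (𝓝[>] 0) (𝓝 Lm) →
          Lp - Lm = ∑ i, β i * ind (Q i) x := by
  have hn0 : n ≠ 0 := by rintro rfl; simp at hn
  have hH : MeasurableSet {x : Euc d | ⟪n, x⟫ = c} :=
    measurableSet_eq_fun (by fun_prop) measurable_const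
  have hν : ∀ a ∉ ℝ ∙ n, ∀ b,
      (μH[(d : ℝ) - 1] : Measure (Euc d)).restrict {x | ⟪n, x⟫ = c} {x | ⟪a, x⟫ = b} = 0 :=
    fun a ha b => hausdorffMeasure_restrict_hyperplane_eq_zero hn0 ha c b (by simp)
  obtain ⟨Gp, hGp, fp, hfp, hfp_ae⟩ :=
    hP.exists_germ_ae_eq_mem_span hn0 (ae_restrict_mem hH) hν n
  obtain ⟨Gm, hGm, fm, hfm, hfm_ae⟩ :=
    hP.exists_germ_ae_eq_mem_span hn0 (ae_restrict_mem hH) hν (-n)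
  have hlim_p : ∀ x, Tendsto (fun ε : ℝ => ind P (x + ε • n)) (𝓝[>] 0) (𝓝 (ind Gp x)) :=
    hGp.tendsto_indicator
  have hlim_m : ∀ x, Tendsto (fun ε : ℝ => ind P (x - ε • n)) (𝓝[>] 0) (𝓝 (ind Gm x)) := by
    intro x
    simp only [sub_eq_add_neg, ← smul_neg]
    exact hGm.tendsto_indicator x
  obtain ⟨k, β, g, hg⟩ := Submodule.mem_span_set'.1 (sub_mem hfp hfm)
  choose Q hQ hgQ using fun i => (g i).2
  refine ⟨ae_of_all _ fun x => ⟨⟨_, hlim_p x⟩, ⟨_, hlim_m x⟩⟩, k, β, Q, hQ, ?_⟩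
  filter_upwards [hfp_ae, hfm_ae] with x hxp hxm Lp Lm hLp hLm
  rw [tendsto_nhds_unique hLp (hlim_p x), tendsto_nhds_unique hLm (hlim_m x), hxp, hxm,
    ← Pi.sub_apply, ← hg, Finset.sum_apply]
  simp [hgQ]
end
end

section
/- Let w_1, …, w_d ∈ ℝ^d be linearly independent vectors and let K = {t_1 w_1 + ⋯ + t_d w_d : t_j ≥ 0} be the simplicial cone they generate. For every z ∈ ℝ^d with ⟨w_j, z⟩ < 0 for all j = 1, …, d, the function x ↦ e^{⟨z,x⟩} is Lebesgue integrable on K and ∫_K e^{⟨z,x⟩} dx = |det(w_1, …, w_d)| / ∏_{j=1}^d (−⟨w_j, z⟩). -/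
open MeasureTheory Filter Topology RealInnerProductSpace

noncomputable section

/-- The `d × d` matrix whose columns are the vectors `w 0, …, w (d-1)`. -/
def colMat {d : ℕ} (w : Fin d → Euc d) : Matrix (Fin d) (Fin d) ℝ :=
  Matrix.of fun i j => w j i

/-- The cone of all nonnegative linear combinations of the vectors `w j`. -/
def posCone {d m : ℕ} (w : Fin m → Euc d) : Set (Euc d) :=
  {x | ∃ t : Fin m → ℝ, (∀ j, 0 ≤ t j) ∧ x = ∑ j, t j • w j}

/-!
Substituting `x = ∑ j, t j • w j` is the linear change of variables `x = W t`, where `W` is the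
matrix with columns `w j`: it maps the nonnegative orthant bijectively onto the cone, with
Jacobian `|det W|`. In the coordinates `t` the integrand `e^{⟪z, W t⟫} = ∏ j, e^{⟪w j, z⟫ t j}`
factors, so the integral over the orthant is a product of the one-dimensional integrals
`∫₀^∞ e^{c t} dt = (-c)⁻¹`.
-/

open Set

section LinearChangeOfVariables

variable {E F : Type*} [NormedAddCommGroup E] [NormedSpace ℝ E] [FiniteDimensional ℝ E]
  [MeasurableSpace E] [BorelSpace E] [NormedAddCommGroup F] [NormedSpace ℝ F]
  (μ : Measure E) [μ.IsAddHaarMeasure] {T : E →ₗ[ℝ] E} {s : Set E}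

theorem integrableOn_image_linearMap_iff (hT : Function.Injective T) (hs : MeasurableSet s)
    (f : E → F) :
    IntegrableOn f (T '' s) μ ↔ IntegrableOn (fun x => |LinearMap.det T| • f (T x)) s μ :=
  integrableOn_image_iff_integrableOn_abs_det_fderiv_smul μ hs
    (fun _ _ => T.toContinuousLinearMap.hasFDerivAt.hasFDerivWithinAt) hT.injOn f

theorem setIntegral_image_linearMap [CompleteSpace F] (hT : Function.Injective T)
    (hs : MeasurableSet s) (f : E → F) :
    ∫ x in T '' s, f x ∂μ = |LinearMap.det T| • ∫ x in s, f (T x) ∂μ := by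
  rw [← integral_smul]
  exact integral_image_eq_integral_abs_det_fderiv_smul μ hs
    (fun _ _ => T.toContinuousLinearMap.hasFDerivAt.hasFDerivWithinAt) hT.injOn f

end LinearChangeOfVariables

theorem integrableOn_exp_mul_Ici {c : ℝ} (hc : c < 0) :
    IntegrableOn (fun t => Real.exp (c * t)) (Ici 0) := by
  rw [integrableOn_Ici_iff_integrableOn_Ioi]
  exact integrableOn_exp_mul_Ioi hc 0

theorem integral_exp_mul_Ici {c : ℝ} (hc : c < 0) :
    ∫ t in Ici 0, Real.exp (c * t) = (-c)⁻¹ := by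
  rw [integral_Ici_eq_integral_Ioi, integral_exp_mul_Ioi hc, mul_zero, Real.exp_zero,
    neg_div, one_div, neg_inv]

def nonnegOrthant (ι : Type*) [Fintype ι] : Set (EuclideanSpace ℝ ι) := {t | ∀ i, 0 ≤ t i}

section Orthant

variable {ι : Type*} [Fintype ι] {c : ι → ℝ}

theorem nonnegOrthant_eq_preimage :
    nonnegOrthant ι = WithLp.ofLp ⁻¹' univ.pi fun _ => Ici 0 := by
  ext t
  simp only [nonnegOrthant, mem_ofPred_eq, mem_preimage, mem_univ_pi, mem_Ici]

theorem measurableSet_nonnegOrthant : MeasurableSet (nonnegOrthant ι) := by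
  rw [nonnegOrthant_eq_preimage]
  exact (MeasurableSet.univ_pi fun _ => measurableSet_Ici).preimage
    (PiLp.volume_preserving_ofLp ι).measurable

theorem integrableOn_exp_sum_mul_nonnegOrthant (hc : ∀ i, c i < 0) :
    IntegrableOn (fun t : EuclideanSpace ℝ ι => Real.exp (∑ i, c i * t i)) (nonnegOrthant ι) := by
  rw [nonnegOrthant_eq_preimage]
  refine ((PiLp.volume_preserving_ofLp ι).integrableOn_comp_preimage
    (MeasurableEquiv.toLp 2 (ι → ℝ)).symm.measurableEmbedding
    (f := fun y => Real.exp (∑ i, c i * y i))).mpr ?_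
  rw [IntegrableOn, volume_pi, Measure.restrict_pi_pi]
  simp_rw [Real.exp_sum]
  exact Integrable.fintype_prod fun i => integrableOn_exp_mul_Ici (hc i)

theorem integral_exp_sum_mul_nonnegOrthant (hc : ∀ i, c i < 0) :
    ∫ t in nonnegOrthant ι, Real.exp (∑ i, c i * t i) = ∏ i, (-c i)⁻¹ := by
  rw [nonnegOrthant_eq_preimage, (PiLp.volume_preserving_ofLp ι).setIntegral_preimage_emb
    (MeasurableEquiv.toLp 2 (ι → ℝ)).symm.measurableEmbedding
    (fun y => Real.exp (∑ i, c i * y i)), volume_pi, Measure.restrict_pi_pi]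
  simp_rw [Real.exp_sum]
  rw [integral_fintype_prod_eq_prod (f := fun i t => Real.exp (c i * t))]
  exact Finset.prod_congr rfl fun i _ => integral_exp_mul_Ici (hc i)

end Orthant

section Cone

variable {d : ℕ} {w : Fin d → Euc d}

theorem toLpLin_colMat_apply (t : Euc d) :
    Matrix.toLpLin 2 2 (colMat w) t = ∑ j, t j • w j := by
  ext i
  simp [Matrix.toLpLin_apply, Matrix.mulVec, dotProduct, colMat, mul_comm]

theorem toLpLin_colMat_injective (hw : LinearIndependent ℝ w) :
    Function.Injective (Matrix.toLpLin 2 2 (colMat w)) := by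
  intro s t hst
  simp only [toLpLin_colMat_apply] at hst
  exact WithLp.ofLp_injective 2
    (hw.fintypeLinearCombination_injective (by simpa [Fintype.linearCombination_apply] using hst))

theorem posCone_eq_image_nonnegOrthant :
    posCone w = Matrix.toLpLin 2 2 (colMat w) '' nonnegOrthant (Fin d) := by
  ext x
  simp only [posCone, mem_image, nonnegOrthant, toLpLin_colMat_apply]
  constructor
  · rintro ⟨t, ht, rfl⟩
    exact ⟨WithLp.toLp 2 t, ht, rfl⟩
  · rintro ⟨t, ht, rfl⟩
    exact ⟨t, ht, rfl⟩

end Cone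

/-- The Fourier–Laplace transform of a simplicial cone: for `z` with
`⟪w j, z⟫ < 0` for all generators, `∫_K e^{⟪z,x⟫} dx = |det(w₁,…,w_d)| / ∏ (-⟪w j, z⟫)`. -/
theorem statement_10 {d : ℕ} (w : Fin d → Euc d) (hw : LinearIndependent ℝ w)
    (z : Euc d) (hz : ∀ j, ⟪w j, z⟫ < 0) :
    IntegrableOn (fun x => Real.exp ⟪z, x⟫) (posCone w) volume ∧
    ∫ x in posCone w, Real.exp ⟪z, x⟫ =
      |(colMat w).det| / ∏ j, (-⟪w j, z⟫) := by
  have hT := toLpLin_colMat_injective hw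
  have hinner (t : Euc d) : ⟪z, Matrix.toLpLin 2 2 (colMat w) t⟫ = ∑ j, ⟪w j, z⟫ * t j := by
    simp only [toLpLin_colMat_apply, inner_sum, real_inner_smul_right, real_inner_comm,
      mul_comm]
  rw [posCone_eq_image_nonnegOrthant, integrableOn_image_linearMap_iff volume hT
    measurableSet_nonnegOrthant, setIntegral_image_linearMap volume hT measurableSet_nonnegOrthant,
    LinearMap.det_toLpLin]
  simp_rw [hinner, smul_eq_mul]
  refine ⟨(integrableOn_exp_sum_mul_nonnegOrthant hz).const_mul _, ?_⟩
  rw [integral_exp_sum_mul_nonnegOrthant hz, Finset.prod_inv_distrib, div_eq_mul_inv]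
end
end

section
/- Let C_1, …, C_n ⊆ ℝ^d be polyhedral cones with apex at the origin, each with nonempty interior, with pairwise disjoint interiors, and suppose there is a vector u ∈ ℝ^d with ⟨u,x⟩ > 0 for every nonzero x in every C_i. Let α_1, …, α_n ∈ ℝ and g = ∑_{i=1}^n α_i · [C_i]. If for every z ∈ ℝ^d satisfying ⟨z,x⟩ < 0 for every nonzero x in every C_i one has ∫_{ℝ^d} g(x) e^{⟨z,x⟩} dx = 0 (all these integrals converge), then α_1 = ⋯ = α_n = 0. -/
open MeasureTheory Filter Topology RealInnerProductSpace

noncomputable section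

/-- A polyhedral cone with apex at the origin: all nonnegative linear combinations of a
finite set of vectors. -/
def IsPolyhedralCone0 {d : ℕ} (C : Set (Euc d)) : Prop :=
  ∃ (m : ℕ) (w : Fin m → Euc d), C = posCone w

/-!
Put `f x = g x * exp ⟪-u, x⟫` with `g = ∑ i, α i * ind (C i)`; it is integrable because
`c * ‖x‖ ≤ ⟪u, x⟫` on the cones for some `c > 0`. Pick finitely many vectors `z k`, perturbations
of `-u`, that are nonpositive on the cones and separate points. Every `∑ k, n k • z k - u` with
`n k ∈ ℕ` is admissible, so all integrals `∫ f x * ∏ k, exp ⟪z k, x⟫ ^ n k` vanish. Pushed forward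
by `x ↦ (exp ⟪z k, x⟫)ₖ`, the positive and negative parts of `f` become two finite measures on the
unit cube with the same moments; polynomials separate points of the cube, so by Stone–Weierstrass
the measures coincide, and `f = 0` a.e. Finally, distinct cones meet only in their (null)
boundaries, so `g = α i` a.e. on the nonempty open set `interior (C i)`.
-/

open BoundedContinuousFunction

theorem exists_pos_forall_le {ι : Type*} [Finite ι] {c : ι → ℝ} (hc : ∀ i, 0 < c i) :
    ∃ ε > 0, ∀ i, ε ≤ c i := by
  have h : ∀ᶠ ε in 𝓝[>] (0 : ℝ), ∀ i, ε ≤ c i :=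
    eventually_all.2 fun i =>
      eventually_nhdsWithin_of_eventually_nhds (eventually_le_nhds (hc i))
  obtain ⟨ε, hεc, hε⟩ := (h.and self_mem_nhdsWithin).exists
  exact ⟨ε, hε, hεc⟩

theorem integrable_exp_neg_mul_norm {E : Type*} [NormedAddCommGroup E] [NormedSpace ℝ E]
    [FiniteDimensional ℝ E] [MeasurableSpace E] [BorelSpace E] (μ : Measure E)
    [μ.IsAddHaarMeasure] {c : ℝ} (hc : 0 < c) :
    Integrable (fun x => Real.exp (-(c * ‖x‖))) μ := by
  set n := Module.finrank ℝ E + 1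
  have hdom := (integrable_one_add_norm (μ := μ) (r := n) (by simp [n])).const_mul
    (n.factorial * Real.exp c / c ^ n)
  refine hdom.mono' (by fun_prop) (Eventually.of_forall fun x => ?_)
  have hx : 0 < 1 + ‖x‖ := by positivity
  rw [Real.norm_of_nonneg (Real.exp_pos _).le, Real.rpow_neg hx.le, Real.rpow_natCast]
  calc Real.exp (-(c * ‖x‖)) = Real.exp c * (Real.exp (c * (1 + ‖x‖)))⁻¹ := by
        rw [← Real.exp_neg, ← Real.exp_add]; ring_nf
    _ ≤ Real.exp c * ((c * (1 + ‖x‖)) ^ n / n.factorial)⁻¹ := by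
        gcongr
        exact Real.pow_div_factorial_le_exp _ (by positivity) n
    _ = n.factorial * Real.exp c / c ^ n * ((1 + ‖x‖) ^ n)⁻¹ := by
        rw [mul_pow]; field_simp

theorem integral_withDensity_ofReal {α : Type*} [MeasurableSpace α] {μ : Measure α}
    {g φ : α → ℝ} (hg : AEMeasurable g μ) (hφ : ∀ x, 0 ≤ φ x) :
    ∫ x, φ x ∂μ.withDensity (fun x => ENNReal.ofReal (g x)) = ∫ x, max (g x * φ x) 0 ∂μ := by
  rw [integral_withDensity_eq_integral_toReal_smul₀ hg.ennreal_ofReal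
    (Eventually.of_forall fun _ => ENNReal.ofReal_lt_top)]
  congr 1 with x
  rw [ENNReal.toReal_ofReal', smul_eq_mul, max_mul_of_nonneg _ _ (hφ x), zero_mul]

section Moments

variable {ι : Type*} [Fintype ι]

abbrev unitCube (ι : Type*) : Set (ι → ℝ) := Set.Icc 0 1

def cubeCoord (k : ι) : unitCube ι →ᵇ ℝ :=
  mkOfCompact ⟨fun y => (y : ι → ℝ) k, (continuous_apply k).comp continuous_subtype_val⟩

theorem exists_eq_monomial_of_mem_closure_range_cubeCoord {f : unitCube ι →ᵇ ℝ}
    (hf : f ∈ Submonoid.closure (Set.range cubeCoord)) :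
    ∃ n : ι → ℕ, ⇑f = fun y : unitCube ι => ∏ k, (y : ι → ℝ) k ^ n k := by
  induction hf using Submonoid.closure_induction with
  | mem f hf =>
    obtain ⟨k, rfl⟩ := hf
    classical
    exact ⟨Pi.single k 1, by ext y; simp [Pi.single_apply, cubeCoord]⟩
  | one => exact ⟨0, by ext y; simp⟩
  | mul f f' _ _ hf hf' =>
    obtain ⟨n, hn⟩ := hf
    obtain ⟨n', hn'⟩ := hf'
    exact ⟨n + n', by ext y; simp [hn, hn', pow_add, Finset.prod_mul_distrib]⟩

theorem ext_of_forall_integral_monomial_eq {μ ν : Measure (unitCube ι)}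
    [IsFiniteMeasure μ] [IsFiniteMeasure ν]
    (h : ∀ n : ι → ℕ, ∫ y, ∏ k, (y : ι → ℝ) k ^ n k ∂μ = ∫ y, ∏ k, (y : ι → ℝ) k ^ n k ∂ν) :
    μ = ν := by
  refine ext_of_forall_mem_subalgebra_integral_eq_of_pseudoEMetric_complete_countable
    (A := StarAlgebra.adjoin ℝ (Set.range cubeCoord)) ?_ fun g hg => ?_
  · intro y y' hne
    obtain ⟨k, hk⟩ : ∃ k, (y : ι → ℝ) k ≠ (y' : ι → ℝ) k := by
      by_contra! h
      exact hne (Subtype.ext (funext h))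
    exact ⟨_, ⟨_, ⟨cubeCoord k, StarAlgebra.subset_adjoin ℝ _ ⟨k, rfl⟩, rfl⟩, rfl⟩, hk⟩
  have hstar : star (Set.range (cubeCoord (ι := ι))) = Set.range cubeCoord := by
    ext f
    rw [Set.mem_star, show star f = f by ext; simp]
  replace hg : g ∈ Submodule.span ℝ ↑(Submonoid.closure (Set.range (cubeCoord (ι := ι)))) := by
    have hspan := StarAlgebra.adjoin_eq_span (R := ℝ) (Set.range (cubeCoord (ι := ι)))
    rw [hstar, Set.union_self] at hspan
    exact hspan ▸ hg
  induction hg using Submodule.span_induction with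
  | mem f hf =>
    obtain ⟨n, hn⟩ := exists_eq_monomial_of_mem_closure_range_cubeCoord hf
    rw [hn]
    exact h n
  | zero => simp
  | add f f' _ _ hf hf' =>
    simp only [coe_add, Pi.add_apply]
    rw [integral_add (f.integrable _) (f'.integrable _),
      integral_add (f.integrable _) (f'.integrable _), hf, hf']
  | smul a f _ hf =>
    simp only [coe_smul, smul_eq_mul, integral_const_mul, hf]

theorem ext_of_forall_integral_exp_eq_of_nonpos {μ ν : Measure (ι → ℝ)}
    [IsFiniteMeasure μ] [IsFiniteMeasure ν]
    (hμ : ∀ᵐ y ∂μ, ∀ k, y k ≤ 0) (hν : ∀ᵐ y ∂ν, ∀ k, y k ≤ 0)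
    (h : ∀ n : ι → ℕ, ∫ y, Real.exp (∑ k, n k * y k) ∂μ = ∫ y, Real.exp (∑ k, n k * y k) ∂ν) :
    μ = ν := by
  let expCube (y : ι → ℝ) : unitCube ι :=
    ⟨fun k => Real.exp (min (y k) 0), fun k => (Real.exp_pos _).le,
      fun k => Real.exp_le_one_iff.2 (min_le_right _ _)⟩
  have hexp : Continuous expCube := by unfold expCube; fun_prop
  have hlog : Measurable fun p : unitCube ι => fun k => Real.log ((p : ι → ℝ) k) :=
    measurable_pi_lambda _ fun k =>
      Real.measurable_log.comp ((measurable_pi_apply k).comp measurable_subtype_coe)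
  have hmap_eq : ∀ ρ : Measure (ι → ℝ), (∀ᵐ y ∂ρ, ∀ k, y k ≤ 0) →
      (ρ.map expCube).map (fun (p : unitCube ι) k => Real.log ((p : ι → ℝ) k)) = ρ := by
    intro ρ hρ
    rw [Measure.map_map hlog hexp.measurable]
    conv_rhs => rw [← Measure.map_id (μ := ρ)]
    refine Measure.map_congr (hρ.mono fun y hy => funext fun k => ?_)
    simp [expCube, min_eq_left (hy k)]
  have hmoment : ∀ ρ : Measure (ι → ℝ), (∀ᵐ y ∂ρ, ∀ k, y k ≤ 0) → ∀ n : ι → ℕ,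
      ∫ p, ∏ k, (p : ι → ℝ) k ^ n k ∂(ρ.map expCube) = ∫ y, Real.exp (∑ k, n k * y k) ∂ρ := by
    intro ρ hρ n
    rw [integral_map (f := fun p : unitCube ι => ∏ k, (p : ι → ℝ) k ^ n k)
      hexp.aemeasurable (continuous_finsetProd _ fun k _ =>
        ((continuous_apply k).comp continuous_subtype_val).pow (n k)).aestronglyMeasurable]
    refine integral_congr_ae (hρ.mono fun y hy => ?_)
    simp [expCube, min_eq_left (hy _), Real.exp_sum, ← Real.exp_nat_mul]
  have hcube : μ.map expCube = ν.map expCube :=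
    ext_of_forall_integral_monomial_eq fun n => by rw [hmoment μ hμ, hmoment ν hν, h]
  rw [← hmap_eq μ hμ, ← hmap_eq ν hν, hcube]

variable {E : Type*} [NormedAddCommGroup E] [InnerProductSpace ℝ E] {z : ι → E}

theorem inner_sum_smul_nonpos {x : E} (hz : ∀ k, ⟪z k, x⟫ ≤ 0) {a : ι → ℝ}
    (ha : ∀ k, 0 ≤ a k) : ⟪∑ k, a k • z k, x⟫ ≤ 0 := by
  rw [sum_inner]
  exact Finset.sum_nonpos fun k _ => by
    rw [real_inner_smul_left]
    exact mul_nonpos_of_nonneg_of_nonpos (ha k) (hz k)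

variable [MeasurableSpace E] [BorelSpace E]

theorem MeasureTheory.Integrable.mul_exp_inner {μ : Measure E} {f : E → ℝ} (hf : Integrable f μ)
    {w : E} (hw : ∀ᵐ x ∂μ, f x ≠ 0 → ⟪w, x⟫ ≤ 0) :
    Integrable (fun x => f x * Real.exp ⟪w, x⟫) μ := by
  refine hf.norm.mono' (hf.1.mul (by fun_prop)) ?_
  filter_upwards [hw] with x hx
  rcases eq_or_ne (f x) 0 with hfx | hfx
  · simp [hfx]
  rw [norm_mul, Real.norm_of_nonneg (Real.exp_pos _).le]
  exact mul_le_of_le_one_right (norm_nonneg _) (Real.exp_le_one_iff.2 (hx hfx))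

variable [FiniteDimensional ℝ E]

theorem ext_of_forall_integral_exp_inner_eq (hz : ∀ x, (∀ k, ⟪z k, x⟫ = 0) → x = 0)
    {μ ν : Measure E} [IsFiniteMeasure μ] [IsFiniteMeasure ν]
    (hμ : ∀ᵐ x ∂μ, ∀ k, ⟪z k, x⟫ ≤ 0) (hν : ∀ᵐ x ∂ν, ∀ k, ⟪z k, x⟫ ≤ 0)
    (h : ∀ n : ι → ℕ, ∫ x, Real.exp ⟪∑ k, (n k : ℝ) • z k, x⟫ ∂μ =
      ∫ x, Real.exp ⟪∑ k, (n k : ℝ) • z k, x⟫ ∂ν) :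
    μ = ν := by
  let Λ : E →ₗ[ℝ] ι → ℝ := LinearMap.pi fun k => innerₗ E (z k)
  have hΛ : MeasurableEmbedding Λ :=
    (Λ.isClosedEmbedding_of_injective (LinearMap.ker_eq_bot'.2 fun x hx =>
      hz x fun k => congrFun hx k)).measurableEmbedding
  have hmoment : ∀ (ρ : Measure E) (n : ι → ℕ),
      ∫ y, Real.exp (∑ k, n k * y k) ∂ρ.map Λ = ∫ x, Real.exp ⟪∑ k, (n k : ℝ) • z k, x⟫ ∂ρ := by
    intro ρ n
    simp [hΛ.integral_map, Λ, sum_inner, real_inner_smul_left]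
  refine hΛ.map_injective (ext_of_forall_integral_exp_eq_of_nonpos
    (hΛ.ae_map_iff.2 hμ) (hΛ.ae_map_iff.2 hν) fun n => ?_)
  rw [hmoment, hmoment, h]

theorem ae_eq_zero_of_forall_integral_mul_exp_inner_eq_zero
    (hz : ∀ x, (∀ k, ⟪z k, x⟫ = 0) → x = 0) {μ : Measure E} {f : E → ℝ} (hf : Integrable f μ)
    (hsupp : ∀ᵐ x ∂μ, f x ≠ 0 → ∀ k, ⟪z k, x⟫ ≤ 0)
    (h : ∀ n : ι → ℕ, ∫ x, f x * Real.exp ⟪∑ k, (n k : ℝ) • z k, x⟫ ∂μ = 0) :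
    f =ᵐ[μ] 0 := by
  have hint : ∀ n : ι → ℕ, Integrable (fun x => f x * Real.exp ⟪∑ k, (n k : ℝ) • z k, x⟫) μ :=
    fun n => hf.mul_exp_inner (hsupp.mono fun x hx hfx =>
      inner_sum_smul_nonpos (hx hfx) fun k => (n k).cast_nonneg)
  have hpart_supp : ∀ g : E → ℝ, AEMeasurable g μ → (∀ x, g x ≠ 0 → f x ≠ 0) →
      ∀ᵐ x ∂μ.withDensity (fun x => ENNReal.ofReal (g x)), ∀ k, ⟪z k, x⟫ ≤ 0 := by
    intro g hg hgf
    rw [ae_withDensity_iff' hg.ennreal_ofReal]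
    filter_upwards [hsupp] with x hx hpos
    exact hx (hgf x fun h0 => hpos (by simp [h0]))
  have := isFiniteMeasure_withDensity_ofReal hf.2
  have := isFiniteMeasure_withDensity_ofReal hf.fun_neg.2
  have heq : μ.withDensity (fun x => ENNReal.ofReal (f x)) =
      μ.withDensity (fun x => ENNReal.ofReal (-f x)) :=
    ext_of_forall_integral_exp_inner_eq hz (hpart_supp f hf.1.aemeasurable fun _ => id)
      (hpart_supp (fun x => -f x) hf.fun_neg.1.aemeasurable fun _ => by simp) fun n => by
      rw [integral_withDensity_ofReal hf.1.aemeasurable fun _ => (Real.exp_pos _).le,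
        integral_withDensity_ofReal hf.fun_neg.1.aemeasurable fun _ => (Real.exp_pos _).le,
        ← sub_eq_zero, ← integral_sub (hint n).pos_part (by simpa using (hint n).neg_part)]
      simpa [max_zero_sub_max_neg_zero_eq_self] using h n
  rw [withDensity_eq_iff hf.1.aemeasurable.ennreal_ofReal hf.fun_neg.1.aemeasurable.ennreal_ofReal
    hf.lintegral_lt_top.ne] at heq
  filter_upwards [heq] with x hx
  have := congrArg ENNReal.toReal hx
  rw [ENNReal.toReal_ofReal', ENNReal.toReal_ofReal'] at this
  simpa [this] using (max_zero_sub_max_neg_zero_eq_self (f x)).symm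

end Moments

namespace posCone

variable {d m : ℕ} (w : Fin m → Euc d)

theorem eq_image : posCone w = (fun t : Fin m → ℝ => ∑ j, t j • w j) '' Set.Ici 0 := by
  ext x
  simp [posCone, Pi.le_def, eq_comm]

theorem convex : Convex ℝ (posCone w) := by
  rw [eq_image]
  exact (convex_Ici 0).is_linear_image
    ⟨fun s t => by simp [add_smul, Finset.sum_add_distrib],
      fun a t => by simp [Finset.smul_sum, smul_smul]⟩

theorem measurableSet : MeasurableSet (posCone w) := by
  obtain ⟨K, hK, hKw⟩ : IsSigmaCompact (posCone w) := by
    rw [eq_image]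
    exact (isSigmaCompact_univ.of_isClosed_subset isClosed_Ici (Set.subset_univ _)).image
      (by fun_prop)
  rw [← hKw]
  exact .iUnion fun n => (hK n).measurableSet

theorem generator_mem (j : Fin m) : w j ∈ posCone w := by
  classical
  exact ⟨Pi.single j 1, fun k => by by_cases h : k = j <;> simp [h], by simp [Pi.single_apply]⟩

theorem subset_of_generator_mem {S : Set (Euc d)} (h0 : (0 : Euc d) ∈ S)
    (hadd : ∀ x ∈ S, ∀ y ∈ S, x + y ∈ S) (hsmul : ∀ t : ℝ, 0 ≤ t → ∀ x ∈ S, t • x ∈ S)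
    (hw : ∀ j, w j ∈ S) : posCone w ⊆ S := by
  rintro _ ⟨t, ht, rfl⟩
  exact Finset.sum_induction _ (· ∈ S) (fun x y hx hy => hadd x hx y hy) h0
    fun j _ => hsmul _ (ht j) _ (hw j)

theorem exists_pos_mul_norm_le_inner {u : Euc d}
    (hu : ∀ x ∈ posCone w, x ≠ 0 → 0 < ⟪u, x⟫) :
    ∃ c > 0, ∀ x ∈ posCone w, c * ‖x‖ ≤ ⟪u, x⟫ := by
  have hgen : ∀ j, ∃ c > 0, c * ‖w j‖ ≤ ⟪u, w j⟫ := by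
    intro j
    rcases eq_or_ne (w j) 0 with hj | hj
    · exact ⟨1, one_pos, by simp [hj]⟩
    · have hpos := hu _ (generator_mem w j) hj
      refine ⟨⟪u, w j⟫ / ‖w j‖, by positivity, ?_⟩
      rw [div_mul_cancel₀ _ (norm_ne_zero_iff.2 hj)]
  choose c hc0 hc using hgen
  obtain ⟨c₀, hc₀, hc₀c⟩ := exists_pos_forall_le hc0
  refine ⟨c₀, hc₀, subset_of_generator_mem w (S := {x | c₀ * ‖x‖ ≤ ⟪u, x⟫}) (by simp)
    (fun x hx y hy => ?_) (fun t ht x hx => ?_) fun j => ?_⟩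
  · simp only [Set.mem_ofPred_eq, inner_add_right] at hx hy ⊢
    nlinarith [norm_add_le x y]
  · simp only [Set.mem_ofPred_eq, inner_smul_right, norm_smul, Real.norm_of_nonneg ht] at hx ⊢
    nlinarith
  · exact (mul_le_mul_of_nonneg_right (hc₀c j) (norm_nonneg _)).trans (hc j)

end posCone

namespace IsPolyhedralCone0

variable {d : ℕ} {C : Set (Euc d)}

theorem convex (hC : IsPolyhedralCone0 C) : Convex ℝ C := by
  obtain ⟨m, w, rfl⟩ := hC
  exact posCone.convex w

theorem measurableSet (hC : IsPolyhedralCone0 C) : MeasurableSet C := by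
  obtain ⟨m, w, rfl⟩ := hC
  exact posCone.measurableSet w

theorem exists_pos_mul_norm_le_inner (hC : IsPolyhedralCone0 C) {u : Euc d}
    (hu : ∀ x ∈ C, x ≠ 0 → 0 < ⟪u, x⟫) : ∃ c > 0, ∀ x ∈ C, c * ‖x‖ ≤ ⟪u, x⟫ := by
  obtain ⟨m, w, rfl⟩ := hC
  exact posCone.exists_pos_mul_norm_le_inner w hu

end IsPolyhedralCone0

section Cones

variable {d : ℕ} {ι : Type*} [Fintype ι] {C : ι → Set (Euc d)}

theorem exists_pos_forall_mul_norm_le_inner (hC : ∀ i, IsPolyhedralCone0 (C i)) {u : Euc d}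
    (hu : ∀ i, ∀ x ∈ C i, x ≠ 0 → 0 < ⟪u, x⟫) :
    ∃ c > 0, ∀ i, ∀ x ∈ C i, c * ‖x‖ ≤ ⟪u, x⟫ := by
  choose c hc0 hc using fun i => (hC i).exists_pos_mul_norm_le_inner (hu i)
  obtain ⟨c₀, hc₀, hc₀c⟩ := exists_pos_forall_le hc0
  exact ⟨c₀, hc₀, fun i x hx =>
    (mul_le_mul_of_nonneg_right (hc₀c i) (norm_nonneg x)).trans (hc i x hx)⟩

theorem integrable_sum_mul_ind_mul_exp_neg_inner (hC : ∀ i, MeasurableSet (C i)) {u : Euc d}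
    {c : ℝ} (hc0 : 0 < c) (hc : ∀ i, ∀ x ∈ C i, c * ‖x‖ ≤ ⟪u, x⟫) (α : ι → ℝ) :
    Integrable fun x => (∑ i, α i * ind (C i) x) * Real.exp ⟪-u, x⟫ := by
  have hexp : ∀ i, IntegrableOn (fun x => Real.exp ⟪-u, x⟫) (C i) := fun i =>
    (integrable_exp_neg_mul_norm volume hc0).integrableOn.mono' (by fun_prop)
      (ae_restrict_of_forall_mem (hC i) fun x hx => by
        rw [Real.norm_of_nonneg (Real.exp_pos _).le, Real.exp_le_exp, inner_neg_left]
        linarith [hc i x hx])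
  have hsum : (fun x => (∑ i, α i * ind (C i) x) * Real.exp ⟪-u, x⟫) =
      fun x => ∑ i, α i * (C i).indicator (fun x => Real.exp ⟪-u, x⟫) x := by
    ext x
    rw [Finset.sum_mul]
    refine Finset.sum_congr rfl fun i _ => ?_
    by_cases hx : x ∈ C i <;> simp [ind, hx]
  rw [hsum]
  exact integrable_finsetSum _ fun i _ => ((hexp i).integrable_indicator (hC i)).const_mul _

theorem exists_mem_of_sum_mul_ind_ne_zero {α : ι → ℝ} {x : Euc d}
    (hx : ∑ i, α i * ind (C i) x ≠ 0) : ∃ i, x ∈ C i := by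
  contrapose! hx
  exact Finset.sum_eq_zero fun i _ => by simp [ind, hx i]

theorem ae_restrict_interior_sum_mul_ind_eq (hconv : ∀ i, Convex ℝ (C i))
    (hdisj : ∀ i j, i ≠ j → interior (C i) ∩ interior (C j) = ∅) (α : ι → ℝ) (i : ι) :
    ∀ᵐ x ∂volume.restrict (interior (C i)), ∑ j, α j * ind (C j) x = α i := by
  have hfrontier : ∀ᵐ x, ∀ j, x ∉ frontier (C j) :=
    ae_all_iff.2 fun j => measure_eq_zero_iff_ae_notMem.1 ((hconv j).addHaar_frontier volume)
  filter_upwards [ae_restrict_of_ae hfrontier, ae_restrict_mem isOpen_interior.measurableSet]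
    with x hxf hxi
  classical
  rw [Finset.sum_eq_single i (fun j _ hji => ?_) (by simp)]
  · simp [ind, interior_subset hxi]
  · have hxj : x ∉ C j := fun hxj =>
      (hdisj j i hji).subset ⟨by_contra fun h => hxf j ⟨subset_closure hxj, h⟩, hxi⟩
    simp [ind, hxj]

theorem eq_zero_of_sum_mul_ind_ae_eq_zero (hconv : ∀ i, Convex ℝ (C i))
    (hint : ∀ i, (interior (C i)).Nonempty)
    (hdisj : ∀ i j, i ≠ j → interior (C i) ∩ interior (C j) = ∅) {α : ι → ℝ}
    (hα : (fun x => ∑ i, α i * ind (C i) x) =ᵐ[volume] 0) (i : ι) : α i = 0 := by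
  have : (ae (volume.restrict (interior (C i)))).NeBot :=
    ae_restrict_neBot.2 (isOpen_interior.measure_ne_zero volume (hint i))
  obtain ⟨x, hx0, hxi⟩ := ((ae_restrict_of_ae hα).and
    (ae_restrict_interior_sum_mul_ind_eq hconv hdisj α i)).exists
  simpa [hxi] using hx0

end Cones

theorem exists_separating_family_nonpos_on {d : ℕ} {K : Set (Euc d)} {u : Euc d} {c : ℝ}
    (hc : 0 < c) (hK : ∀ x ∈ K, c * ‖x‖ ≤ ⟪u, x⟫) :
    ∃ z : Option (Fin d) → Euc d,
      (∀ x, (∀ k, ⟪z k, x⟫ = 0) → x = 0) ∧ ∀ x ∈ K, ∀ k, ⟪z k, x⟫ ≤ 0 := by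
  -- `z none = -u` makes the family separate points whatever `c` is.
  refine ⟨fun k => -u + k.elim 0 fun j => c • EuclideanSpace.single j 1, fun x hx => ?_, ?_⟩
  · have hu : ⟪u, x⟫ = 0 := by simpa using hx none
    ext j
    simpa [inner_add_left, real_inner_smul_left, hu, hc.ne', EuclideanSpace.inner_single_left]
      using hx (some j)
  · rintro x hx (_ | j)
    · simpa using (mul_nonneg hc.le (norm_nonneg x)).trans (hK x hx)
    · have hj : x j ≤ ‖x‖ := (le_abs_self _).trans (PiLp.norm_apply_le x j)
      simp only [Option.elim_some, inner_add_left, inner_neg_left, real_inner_smul_left,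
        EuclideanSpace.inner_single_left, map_one, one_mul]
      nlinarith [hK x hx]

/-- If internally disjoint full-dimensional polyhedral cones lying in
an open half-space have a vanishing Fourier–Laplace transform of a linear combination of
their indicators, then all the coefficients vanish. -/
theorem statement_11 {d : ℕ} (N : ℕ) (C : Fin N → Set (Euc d))
    (hC : ∀ i, IsPolyhedralCone0 (C i))
    (hint : ∀ i, (interior (C i)).Nonempty)
    (hdisj : ∀ i j, i ≠ j → interior (C i) ∩ interior (C j) = ∅)
    (u : Euc d) (hu : ∀ i, ∀ x ∈ C i, x ≠ 0 → 0 < ⟪u, x⟫)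
    (α : Fin N → ℝ)
    (h0 : ∀ z : Euc d, (∀ i, ∀ x ∈ C i, x ≠ 0 → ⟪z, x⟫ < 0) →
      ∫ x, (∑ i, α i * ind (C i) x) * Real.exp ⟪z, x⟫ = 0) :
    ∀ i, α i = 0 := by
  obtain ⟨c, hc0, hc⟩ := exists_pos_forall_mul_norm_le_inner hC hu
  obtain ⟨z, hz_sep, hz_nonpos⟩ := exists_separating_family_nonpos_on (K := ⋃ i, C i) hc0
    fun x hx => by obtain ⟨i, hi⟩ := Set.mem_iUnion.1 hx; exact hc i x hi
  have hadm (n : Option (Fin d) → ℕ) :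
      ∀ i, ∀ x ∈ C i, x ≠ 0 → ⟪∑ k, (n k : ℝ) • z k + -u, x⟫ < 0 := by
    intro i x hx hx0
    rw [inner_add_left, inner_neg_left]
    linarith [hu i x hx hx0, inner_sum_smul_nonpos (hz_nonpos x (Set.mem_iUnion.2 ⟨i, hx⟩))
      fun k => (n k).cast_nonneg]
  have hf := ae_eq_zero_of_forall_integral_mul_exp_inner_eq_zero hz_sep
    (integrable_sum_mul_ind_mul_exp_neg_inner (fun i => (hC i).measurableSet) hc0 hc α)
    (.of_forall fun x hx => hz_nonpos x <| Set.mem_iUnion.2 <|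
      exists_mem_of_sum_mul_ind_ne_zero (left_ne_zero_of_mul hx))
    fun n => by
      rw [← h0 _ (hadm n)]
      congr 1 with x
      rw [inner_add_left, Real.exp_add, mul_assoc, mul_comm (Real.exp _)]
  refine eq_zero_of_sum_mul_ind_ae_eq_zero (fun i => (hC i).convex) hint hdisj ?_
  filter_upwards [hf] with x hx
  simpa [(Real.exp_pos _).ne'] using hx
end
end

section
/- Let v_1, …, v_n be distinct points of ℝ^d. For each i let F_i be a finite real linear combination of functions of the form z ↦ |det(w_1,…,w_d)| / ∏_{j=1}^d ⟨w_j, z⟩ with w_1, …, w_d ∈ ℝ^d linearly independent, and assume F_i does not vanish identically on the (dense open) set where it is defined. Let α_1, …, α_n ∈ ℝ. If ∑_{i=1}^n α_i · e^{⟨v_i, z⟩} · F_i(z) = 0 for every z ∈ ℝ^d at which all the functions F_1, …, F_n are defined, then α_1 = ⋯ = α_n = 0. -/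
open MeasureTheory Filter Topology RealInnerProductSpace

noncomputable section

/-!
Pick a point `z` off the zero sets of finitely many nonzero polynomials: the linear forms
`⟪w i k j, ·⟫`, the forms `⟪v i - v i', ·⟫` for `i ≠ i'`, and the numerators of the `F i` after
clearing denominators. Each `F i` is homogeneous of degree `-d`, so on the line `t ↦ t • z` the
hypothesis reads `∑ i, α i * F i z * exp (t * ⟪v i, z⟫) = 0` for `t ≠ 0`, hence for all `t` by
continuity. The frequencies `⟪v i, z⟫` are distinct, so linear independence of exponentials
gives `α i * F i z = 0`, and `F i z ≠ 0`.
-/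

theorem linearIndependent_exp_mul {ι : Type*} {b : ι → ℝ} (hb : Function.Injective b) :
    LinearIndependent ℝ fun i (t : ℝ) => Real.exp (b i * t) := by
  let χ : ℝ → Multiplicative ℝ →* ℝ := fun β =>
    { toFun := fun t => Real.exp (β * t.toAdd)
      map_one' := by simp
      map_mul' := fun x y => by simp [toAdd_mul, mul_add, Real.exp_add] }
  have hχ : Function.Injective χ := fun β β' h => by
    simpa [χ] using DFunLike.congr_fun h (Multiplicative.ofAdd 1)
  exact (linearIndependent_monoidHom (Multiplicative ℝ) ℝ).comp _ (hχ.comp hb)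

theorem eq_zero_of_sum_mul_exp_eq_zero {ι : Type*} [Fintype ι] {b : ι → ℝ}
    (hb : Function.Injective b) {β : ι → ℝ}
    (h : ∀ t ≠ 0, ∑ i, β i * Real.exp (b i * t) = 0) (i : ι) : β i = 0 := by
  have hcont : Continuous fun t => ∑ i, β i * Real.exp (b i * t) := by fun_prop
  have hzero : (fun t => ∑ i, β i * Real.exp (b i * t)) = 0 :=
    hcont.ext_on (dense_compl_singleton 0) continuous_const h
  refine Fintype.linearIndependent_iff.mp (linearIndependent_exp_mul hb) β ?_ i
  simpa [funext_iff] using hzero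

theorem MvPolynomial.exists_eval_ne_zero {R σ : Type*} [CommRing R] [IsDomain R] [Infinite R]
    {p : MvPolynomial σ R} (hp : p ≠ 0) : ∃ x, eval x p ≠ 0 := by
  by_contra! h
  exact hp (MvPolynomial.funext fun x => by simpa using h x)

section InverseProducts

variable {E ι κ τ : Type*} [NormedAddCommGroup E] [InnerProductSpace ℝ E]
  [Fintype ι] [Fintype κ] [Fintype τ]

def sumInvProd (a : κ → ℝ) (w : κ → τ → E) (z : E) : ℝ :=
  ∑ k, a k / ∏ j, ⟪w k j, z⟫

theorem sumInvProd_smul (a : κ → ℝ) (w : κ → τ → E) (t : ℝ) (z : E) :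
    sumInvProd a w (t • z) = (t ^ Fintype.card τ)⁻¹ * sumInvProd a w z := by
  simp only [sumInvProd, real_inner_smul_right, Finset.prod_mul_distrib, Finset.prod_const,
    Finset.card_univ, Finset.mul_sum, div_eq_mul_inv, mul_inv]
  exact Finset.sum_congr rfl fun _ _ => by ring

theorem mul_eq_zero_of_sum_exp_inner_mul_eq_zero {v : ι → E} {F : ι → E → ℝ} {α : ι → ℝ}
    {z : E} {n : ℕ} (hvz : Function.Injective fun i => ⟪v i, z⟫)
    (hF : ∀ i (t : ℝ), F i (t • z) = (t ^ n)⁻¹ * F i z)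
    (h : ∀ t : ℝ, t ≠ 0 → ∑ i, α i * Real.exp ⟪v i, t • z⟫ * F i (t • z) = 0) (i : ι) :
    α i * F i z = 0 := by
  refine eq_zero_of_sum_mul_exp_eq_zero (β := fun i => α i * F i z) hvz (fun t ht => ?_) i
  calc ∑ i, α i * F i z * Real.exp (⟪v i, z⟫ * t)
      = t ^ n * ∑ i, α i * Real.exp ⟪v i, t • z⟫ * F i (t • z) := by
        simp only [hF, real_inner_smul_right, Finset.mul_sum]
        refine Finset.sum_congr rfl fun _ _ => ?_
        field_simp
    _ = 0 := by rw [h t ht, mul_zero]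

end InverseProducts

section Polynomials

open MvPolynomial

variable {d : ℕ}

def linForm (w : Euc d) : MvPolynomial (Fin d) ℝ :=
  ∑ j, C (w j) * X j

theorem eval_linForm (w z : Euc d) : eval z (linForm w) = ⟪w, z⟫ := by
  simp [linForm, PiLp.inner_apply, mul_comm]

theorem linForm_ne_zero {w : Euc d} (hw : w ≠ 0) : linForm w ≠ 0 := fun h => by
  simpa [h, eq_comm] using (eval_linForm w w).trans_ne (inner_self_ne_zero.mpr hw)

variable {κ τ : Type*} [Fintype κ] [DecidableEq κ] [Fintype τ]

def sumInvProdNumerator (a : κ → ℝ) (w : κ → τ → Euc d) : MvPolynomial (Fin d) ℝ :=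
  ∑ k, C (a k) * ∏ k' ∈ Finset.univ.erase k, ∏ j, linForm (w k' j)

theorem eval_sumInvProdNumerator (a : κ → ℝ) (w : κ → τ → Euc d) {z : Euc d}
    (hz : ∀ k j, ⟪w k j, z⟫ ≠ 0) :
    eval z (sumInvProdNumerator a w) = sumInvProd a w z * ∏ k, ∏ j, ⟪w k j, z⟫ := by
  simp only [sumInvProdNumerator, sumInvProd, map_sum, map_mul, eval_C, eval_prod, eval_linForm,
    Finset.sum_mul]
  refine Finset.sum_congr rfl fun k _ => ?_
  have hk : ∏ j, ⟪w k j, z⟫ ≠ 0 := Finset.prod_ne_zero_iff.mpr fun j _ => hz k j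
  rw [← Finset.mul_prod_erase Finset.univ _ (Finset.mem_univ k)]
  field_simp

end Polynomials

open MvPolynomial in
theorem exists_generic_point {d : ℕ} {ι τ : Type*} [Fintype ι] [DecidableEq ι] [Fintype τ]
    {κ : ι → Type*} [∀ i, Fintype (κ i)] [∀ i, DecidableEq (κ i)]
    {v : ι → Euc d} (hv : Function.Injective v) {a : ∀ i, κ i → ℝ} {w : ∀ i, κ i → τ → Euc d}
    (hF : ∀ i, ∃ z, (∀ k j, ⟪w i k j, z⟫ ≠ 0) ∧ sumInvProd (a i) (w i) z ≠ 0) :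
    ∃ z : Euc d, (∀ i k j, ⟪w i k j, z⟫ ≠ 0) ∧ (∀ i, sumInvProd (a i) (w i) z ≠ 0) ∧
      Function.Injective fun i => ⟪v i, z⟫ := by
  have hprod {z : Euc d} {i} (hz : ∀ k j, ⟪w i k j, z⟫ ≠ 0) : ∏ k, ∏ j, ⟪w i k j, z⟫ ≠ 0 :=
    Finset.prod_ne_zero_iff.mpr fun k _ => Finset.prod_ne_zero_iff.mpr fun j _ => hz k j
  have hnum i : sumInvProdNumerator (a i) (w i) ≠ 0 := fun h => by
    obtain ⟨z, hz, hFz⟩ := hF i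
    have := eval_sumInvProdNumerator (a i) (w i) hz
    rw [h, map_zero, eq_comm] at this
    exact mul_ne_zero hFz (hprod hz) this
  have hw i k j : w i k j ≠ 0 := fun h => by
    obtain ⟨z, hz, -⟩ := hF i
    exact hz k j (by rw [h, inner_zero_left])
  let Q : MvPolynomial (Fin d) ℝ := (∏ i, sumInvProdNumerator (a i) (w i)) *
    (∏ i, ∏ k, ∏ j, linForm (w i k j)) * ∏ p ∈ Finset.univ.offDiag, linForm (v p.1 - v p.2)
  have hQ : Q ≠ 0 := by
    refine mul_ne_zero (mul_ne_zero ?_ ?_) ?_ <;> simp only [Finset.prod_ne_zero_iff]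
    · exact fun i _ => hnum i
    · exact fun i _ k _ j _ => linForm_ne_zero (hw i k j)
    · exact fun p hp => linForm_ne_zero <| sub_ne_zero.mpr <| hv.ne (Finset.mem_offDiag.mp hp).2.2
  obtain ⟨x, hx⟩ := exists_eval_ne_zero hQ
  set z : Euc d := WithLp.toLp 2 x
  change eval z Q ≠ 0 at hx
  simp only [Q, map_mul, eval_prod, eval_linForm, mul_ne_zero_iff, Finset.prod_ne_zero_iff,
    Finset.mem_univ, forall_const, Finset.mem_offDiag, true_and, inner_sub_left] at hx
  obtain ⟨⟨hnumz, hwz⟩, hvz⟩ := hx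
  refine ⟨z, hwz, fun i => ?_, fun i i' h => ?_⟩
  · exact left_ne_zero_of_mul ((eval_sumInvProdNumerator (a i) (w i) (hwz i)) ▸ hnumz i)
  · exact by_contra fun hne => hvz (i, i') hne (sub_eq_zero.mpr h)

theorem statement_14_general {d : ℕ} (N : ℕ) (v : Fin N → Euc d) (hv : Function.Injective v)
    (m : Fin N → ℕ) (c : ∀ i, Fin (m i) → ℝ) (w : ∀ i, Fin (m i) → Fin d → Euc d)
    (hF : ∀ i, ∃ z : Euc d, (∀ k j, ⟪w i k j, z⟫ ≠ 0) ∧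
      ∑ k, c i k * (|(colMat (w i k)).det| / ∏ j, ⟪w i k j, z⟫) ≠ 0)
    (α : Fin N → ℝ)
    (h0 : ∀ z : Euc d, (∀ i k j, ⟪w i k j, z⟫ ≠ 0) →
      ∑ i, α i * Real.exp ⟪v i, z⟫ *
        (∑ k, c i k * (|(colMat (w i k)).det| / ∏ j, ⟪w i k j, z⟫)) = 0) :
    ∀ i, α i = 0 := by
  set F : Fin N → Euc d → ℝ := fun i => sumInvProd (fun k => c i k * |(colMat (w i k)).det|) (w i)
  have hF_eq i z : ∑ k, c i k * (|(colMat (w i k)).det| / ∏ j, ⟪w i k j, z⟫) = F i z := by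
    simp only [F, sumInvProd, mul_div_assoc]
  simp only [hF_eq] at hF h0
  obtain ⟨z, hzw, hzF, hvz⟩ := exists_generic_point hv hF
  have hray (t : ℝ) (ht : t ≠ 0) : ∑ i, α i * Real.exp ⟪v i, t • z⟫ * F i (t • z) = 0 :=
    h0 _ fun i k j => by rw [real_inner_smul_right]; exact mul_ne_zero ht (hzw i k j)
  intro i
  have := mul_eq_zero_of_sum_exp_inner_mul_eq_zero hvz (fun i t => sumInvProd_smul _ _ t z) hray i
  exact (mul_eq_zero.mp this).resolve_right (hzF i)

/-- Exponentials with distinct frequencies times nonvanishing rational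
functions of the given form are linearly independent. -/
theorem statement_14 {d : ℕ} (N : ℕ) (v : Fin N → Euc d) (hv : Function.Injective v)
    (m : Fin N → ℕ) (c : ∀ i, Fin (m i) → ℝ) (w : ∀ i, Fin (m i) → Fin d → Euc d)
    (hw : ∀ i k, LinearIndependent ℝ (w i k))
    (hF : ∀ i, ∃ z : Euc d, (∀ k j, ⟪w i k j, z⟫ ≠ 0) ∧
      ∑ k, c i k * (|(colMat (w i k)).det| / ∏ j, ⟪w i k j, z⟫) ≠ 0)
    (α : Fin N → ℝ)
    (h0 : ∀ z : Euc d, (∀ i k j, ⟪w i k j, z⟫ ≠ 0) →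
      ∑ i, α i * Real.exp ⟪v i, z⟫ *
        (∑ k, c i k * (|(colMat (w i k)).det| / ∏ j, ⟪w i k j, z⟫)) = 0) :
    ∀ i, α i = 0 :=
  statement_14_general N v hv m c w hF α h0
end
end
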